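/- arXiv:2411.02304 — 11 statements merged into one kernel-verified Lean document; each statement's English description precedes it below -/
import Mathlib

section
/- Let G be a finite group and X a conjugacy class of G that generates G. Then the commutator subgroup [G, G] acts transitively on X by conjugation: for all x, y ∈ X there exists d ∈ [G, G] with d x d⁻¹ = y. -/
/-- Let `G` be a finite group and `X` a conjugacy class of `G` that
generates `G`. Then the commutator subgroup `[G, G]` acts transitively on `X` by
conjugation. -/
theorem commutator_transitive_on_generating_conjClass
    {G : Type*} [Group G] [Finite G] (g₀ : G) (X : Set G)
    (hX : X = {x : G | ∃ h : G, h * g₀ * h⁻¹ = x})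
    (hgen : Subgroup.closure X = ⊤) :
    ∀ x ∈ X, ∀ y ∈ X, ∃ d ∈ commutator G, d * x * d⁻¹ = y := by
  intro x hx y hy
  obtain ⟨a, ha⟩ : ∃ h : G, h * g₀ * h⁻¹ = x := by rwa [hX] at hx
  obtain ⟨b, hb⟩ : ∃ h : G, h * g₀ * h⁻¹ = y := by rwa [hX] at hy
  set φ := Abelianization.of (G := G)
  have key : ∀ z ∈ X, φ z = φ g₀ := by
    intro z hz
    obtain ⟨k, hk⟩ : ∃ h : G, h * g₀ * h⁻¹ = z := by rwa [hX] at hz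
    rw [← hk, map_mul, map_mul, map_inv, mul_comm (φ k), mul_assoc,
      mul_inv_cancel, mul_one]
  set h := b * a⁻¹ with hh
  have hxy : h * x * h⁻¹ = y := by rw [← ha, ← hb, hh]; group
  have hmem : φ h ∈ Subgroup.zpowers (φ g₀) := by
    have h1 : h ∈ Subgroup.closure X := by rw [hgen]; trivial
    have h2 : φ h ∈ Subgroup.map φ (Subgroup.closure X) := ⟨h, h1, rfl⟩
    rw [MonoidHom.map_closure] at h2
    refine Subgroup.closure_le (Subgroup.zpowers (φ g₀)) |>.2 ?_ h2
    rintro - ⟨z, hz, rfl⟩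
    rw [key z hz]
    exact Subgroup.mem_zpowers _
  obtain ⟨n, hn⟩ := hmem
  refine ⟨h * x ^ (-n), ?_, ?_⟩
  · have : φ (h * x ^ (-n)) = 1 := by
      rw [map_mul, map_zpow, key x hx, zpow_neg, show (φ g₀)^n = φ h from hn, mul_inv_cancel]
    exact (QuotientGroup.eq_one_iff _).1 this
  · rw [← hxy]; group
end

section
/- Let G be a nilpotent group that is generated by a single conjugacy class X of G. Then G is cyclic. -/
/-!
Induct on the nilpotency class. The image of `g` in `G ⧸ center G` still generates the quotient by
its conjugates, so the quotient is cyclic by induction; a group that is cyclic modulo its centre is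
abelian, and in an abelian group the conjugacy class of `g` is `{g}`, so `G = ⟨g⟩`.
-/

open Subgroup

theorem conjugatesOf_eq_singleton {G : Type*} [Group G] [IsMulCommutative G] (g : G) :
    conjugatesOf g = {g} := by
  ext x
  simp [conjugatesOf, isConj_iff, mul_comm', eq_comm]

theorem closure_conjugatesOf_apply_eq_top {G H : Type*} [Group G] [Group H] {f : G →* H}
    (hf : Function.Surjective f) {g : G} (hg : closure (conjugatesOf g) = ⊤) :
    closure (conjugatesOf (f g)) = ⊤ := by
  rw [eq_top_iff, ← map_top_of_surjective f hf, ← hg, map_le_iff_le_comap, closure_le]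
  exact fun x hx => subset_closure (f.map_isConj hx)

theorem zpowers_eq_top_of_closure_conjugatesOf_eq_top {G : Type*} [Group G] [IsMulCommutative G]
    {g : G} (hg : closure (conjugatesOf g) = ⊤) : zpowers g = ⊤ := by
  rwa [zpowers_eq_closure, ← conjugatesOf_eq_singleton]

theorem Group.IsNilpotent.isCyclic_of_closure_conjugatesOf_eq_top {G : Type*} [Group G]
    [Group.IsNilpotent G] {g : G} (hg : closure (conjugatesOf g) = ⊤) : IsCyclic G := by
  refine nilpotent_center_quotient_ind
    (P := fun G _ _ => ∀ g : G, closure (conjugatesOf g) = ⊤ → IsCyclic G) G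
    (fun _ _ _ _ _ => inferInstance) (fun G _ _ ih g hg => ?_) g hg
  have : IsCyclic (G ⧸ center G) :=
    ih _ (closure_conjugatesOf_apply_eq_top (QuotientGroup.mk'_surjective (center G)) hg)
  have := isMulCommutative_of_isCyclic_quotient_center_self G
  exact isCyclic_iff_exists_zpowers_eq_top.mpr ⟨g, zpowers_eq_top_of_closure_conjugatesOf_eq_top hg⟩

/-- A nilpotent group generated by a single conjugacy class is cyclic. -/
theorem isCyclic_of_nilpotent_closure_conjClass
    {G : Type*} [Group G] [Group.IsNilpotent G] (g₀ : G)
    (hgen : Subgroup.closure {x : G | ∃ h : G, h * g₀ * h⁻¹ = x} = ⊤) :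
    IsCyclic G := by
  have hconj : {x : G | ∃ h : G, h * g₀ * h⁻¹ = x} = conjugatesOf g₀ :=
    Set.ext fun _ => isConj_iff.symm
  exact Group.IsNilpotent.isCyclic_of_closure_conjugatesOf_eq_top (hconj ▸ hgen)
end

section
/- Let G be a finite group and let M, N be normal subgroups of G with N ≤ M. If N ≤ Z*(G) and the quotient group M/N is nilpotent, then M is nilpotent. -/
/-!
In a finite group the upper central series stabilises, so `N ≤ Z_n(G)` for some `n`, and
`Z_n(G) ∩ M ≤ Z_n(M)`. Nilpotency of `M/N` means `γ_c(M) ≤ N` for some `c`; each further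
commutator with `M` then pushes `γ_c(M)` one step down the upper central series of `M`,
so `γ_{c+n}(M) ≤ Z_0(M) = 1`.
-/

/-- The hypercenter `Z*(G)` of a group: the union (supremum) of the upper central series. -/
def hypercenter (G : Type*) [Group G] : Subgroup G :=
  ⨆ n : ℕ, upperCentralSeries G n

namespace Subgroup

theorem upperCentralSeries_subgroupOf_le {G : Type*} [Group G] (H : Subgroup G) (n : ℕ) :
    (upperCentralSeries G n).subgroupOf H ≤ upperCentralSeries H n := by
  induction n with
  | zero => exact (bot_subgroupOf H).le
  | succ n ih =>
    intro x hx y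
    exact ih (mem_subgroupOf.mpr (mem_upperCentralSeries_succ_iff.mp (mem_subgroupOf.mp hx) y))

theorem lowerCentralSeries_add_eq_bot {G : Type*} [Group G] (S : Subgroup G) {c n : ℕ}
    (h : S.lowerCentralSeries c ≤ upperCentralSeries G n) :
    S.lowerCentralSeries (c + n) = ⊥ := by
  induction n generalizing c with
  | zero => exact le_bot_iff.mp h
  | succ n ih =>
    rw [← add_assoc, add_right_comm]
    refine ih ?_
    calc S.lowerCentralSeries (c + 1) = ⁅S.lowerCentralSeries c, S⁆ := rfl
      _ ≤ ⁅upperCentralSeries G (n + 1), ⊤⁆ := commutator_mono h le_top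
      _ ≤ upperCentralSeries G n := commutator_upperCentralSeries_top_le G n

theorem isNilpotent_of_le_upperCentralSeries {G : Type*} [Group G] {H : Subgroup G} [H.Normal]
    {n : ℕ} (hH : H ≤ upperCentralSeries G n) (hG : Group.IsNilpotent (G ⧸ H)) :
    Group.IsNilpotent G := by
  obtain ⟨c, hc⟩ := nilpotent_iff_lowerCentralSeries.mp hG
  have hcH : lowerCentralSeries ⊤ c ≤ H := by
    rw [← QuotientGroup.ker_mk' H, ← map_eq_bot_iff, map_lowerCentralSeries,
      map_top_of_surjective _ (QuotientGroup.mk'_surjective H), hc]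
  exact nilpotent_iff_lowerCentralSeries.mpr ⟨c + n, lowerCentralSeries_add_eq_bot _ (hcH.trans hH)⟩

end Subgroup

theorem exists_hypercenter_eq_upperCentralSeries (G : Type*) [Group G]
    [WellFoundedGT (Subgroup G)] : ∃ n, hypercenter G = Subgroup.upperCentralSeries G n := by
  obtain ⟨n, hn⟩ :=
    WellFoundedGT.monotone_chain_condition ⟨_, Subgroup.upperCentralSeries_mono G⟩
  refine ⟨n, le_antisymm (iSup_le fun m => ?_) (le_iSup (Subgroup.upperCentralSeries G) n)⟩
  rcases le_total m n with hmn | hnm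
  · exact Subgroup.upperCentralSeries_mono G hmn
  · exact (hn m hnm).ge

theorem isNilpotent_of_le_hypercenter_of_quotient_isNilpotent_general
    {G : Type*} [Group G] [Finite G] (M N : Subgroup G) [N.Normal]
    (hNZ : N ≤ hypercenter G)
    (hquot : Group.IsNilpotent (↥M ⧸ N.subgroupOf M)) :
    Group.IsNilpotent M := by
  obtain ⟨n, hn⟩ := exists_hypercenter_eq_upperCentralSeries G
  have hN : N.subgroupOf M ≤ Subgroup.upperCentralSeries M n :=
    (Subgroup.subgroupOf_mono M (hn ▸ hNZ)).trans (Subgroup.upperCentralSeries_subgroupOf_le M n)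
  exact Subgroup.isNilpotent_of_le_upperCentralSeries hN hquot

/-- Let `G` be a finite group and `M`, `N` normal subgroups with `N ≤ M`.
If `N ≤ Z*(G)` and `M/N` is nilpotent, then `M` is nilpotent. -/
theorem isNilpotent_of_le_hypercenter_of_quotient_isNilpotent
    {G : Type*} [Group G] [Finite G] (M N : Subgroup G) [M.Normal] [N.Normal]
    (hNM : N ≤ M) (hNZ : N ≤ hypercenter G)
    (hquot : Group.IsNilpotent (↥M ⧸ N.subgroupOf M)) :
    Group.IsNilpotent M :=
  isNilpotent_of_le_hypercenter_of_quotient_isNilpotent_general M N hNZ hquot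
end

section
/- Let k be a field, G a finite non-abelian group, and V a Yetter–Drinfeld module over kG whose support is a conjugacy class of G that generates G. Let N be the kernel of the representation of G on V (the set of g ∈ G acting as the identity on V). Then the quotient group G/N is non-abelian. -/
/-!
If `G ⧸ N` were abelian, two things would follow. First, `N` is central: an element acting
trivially on `V` fixes every homogeneous component, so by independence of the grading it commutes
with every element of the support, and the support generates `G`. Second, `G ⧸ N` is cyclic: it is
generated by the image of the conjugacy class of `g₀`, which in an abelian quotient is a single
element. A group that is cyclic modulo a central subgroup is abelian, contradicting that `G` is not.
-/

open Subgroup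

section YetterDrinfeld

variable {k G V : Type*} [CommSemiring k] [Group G] [AddCommMonoid V] [Module k V]
  {ρ : Representation k G V} {grading : G → Submodule k V}

theorem conj_eq_self_of_forall_apply_eq (hindep : iSupIndep grading)
    (hcompat : ∀ g h : G, (grading h).map (ρ g) = grading (g * h * g⁻¹))
    {n : G} (hn : ∀ v, ρ n v = v) {x : G} (hx : grading x ≠ ⊥) : n * x * n⁻¹ = x := by
  have hfix : grading (n * x * n⁻¹) = grading x := by
    rw [← hcompat, show ρ n = LinearMap.id from LinearMap.ext hn, Submodule.map_id]
  exact hindep.injOn (by simpa [hfix] using hx) hx hfix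

theorem le_center_of_forall_apply_eq (hindep : iSupIndep grading)
    (hcompat : ∀ g h : G, (grading h).map (ρ g) = grading (g * h * g⁻¹))
    (hgen : closure {g : G | grading g ≠ ⊥} = ⊤)
    {N : Subgroup G} (hN : ∀ n ∈ N, ∀ v, ρ n v = v) : N ≤ center G := by
  rw [← centralizer_univ, ← coe_top, ← hgen, centralizer_closure]
  intro n hn x hx
  have hconj := conj_eq_self_of_forall_apply_eq hindep hcompat (hN n hn) hx
  exact (mul_inv_eq_iff_eq_mul.mp hconj).symm

end YetterDrinfeld

theorem isCyclic_of_closure_conj_eq_top {G H : Type*} [Group G] [Group H] (f : G →* H)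
    (hf : Function.Surjective f) (hH : ∀ a b : H, a * b = b * a) (g₀ : G)
    (hgen : closure {x : G | ∃ h : G, h * g₀ * h⁻¹ = x} = ⊤) : IsCyclic H := by
  have hconj : ∀ h : G, f (h * g₀ * h⁻¹) = f g₀ := fun h => by
    rw [map_mul, map_mul, hH (f h), mul_assoc, map_inv, mul_inv_cancel, mul_one]
  have htop : (⊤ : Subgroup H) ≤ zpowers (f g₀) := by
    rw [← map_top_of_surjective f hf, ← hgen, MonoidHom.map_closure, closure_le]
    rintro _ ⟨_, ⟨h, rfl⟩, rfl⟩
    rw [SetLike.mem_coe, hconj]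
    exact mem_zpowers _
  exact ⟨⟨f g₀, fun y => htop (mem_top y)⟩⟩

theorem quotient_by_kernel_nonabelian_general
    {k : Type*} [Field k] {G : Type*} [Group G] [DecidableEq G]
    (hG : ∃ a b : G, a * b ≠ b * a)
    {V : Type*} [AddCommGroup V] [Module k V]
    (ρ : Representation k G V) (grading : G → Submodule k V)
    (hinternal : DirectSum.IsInternal grading)
    (hcompat : ∀ g h : G, (grading h).map (ρ g) = grading (g * h * g⁻¹))
    (g₀ : G)
    (hsupp : {g : G | grading g ≠ ⊥} = {x : G | ∃ h : G, h * g₀ * h⁻¹ = x})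
    (hgen : Subgroup.closure {g : G | grading g ≠ ⊥} = ⊤)
    (N : Subgroup G) [N.Normal]
    (hker : ∀ g : G, g ∈ N ↔ ∀ v : V, ρ g v = v) :
    ∃ a b : G ⧸ N, a * b ≠ b * a := by
  by_contra! hcomm
  have hcenter : (QuotientGroup.mk' N).ker ≤ center G := by
    rw [QuotientGroup.ker_mk']
    exact le_center_of_forall_apply_eq hinternal.submodule_iSupIndep hcompat hgen
      fun n hn => (hker n).1 hn
  have : IsCyclic (G ⧸ N) := isCyclic_of_closure_conj_eq_top (QuotientGroup.mk' N)
    (QuotientGroup.mk'_surjective N) hcomm g₀ (hsupp ▸ hgen)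
  obtain ⟨a, b, hab⟩ := hG
  exact hab ((QuotientGroup.mk' N).isMulCommutative_of_isCyclic_of_ker_le_center hcenter
    |>.is_comm.comm a b)

/-- Let `k` be a field, `G` a finite non-abelian group, and `V` a
Yetter–Drinfeld module over `kG` (a `G`-representation with a `G`-grading
`V = ⊕_{g ∈ G} V_g` satisfying `g · V_h = V_{ghg⁻¹}`) whose support is a conjugacy class
generating `G`. If `N` is the kernel of the representation of `G` on `V`, then `G/N` is
non-abelian. -/
theorem quotient_by_kernel_nonabelian
    {k : Type*} [Field k] {G : Type*} [Group G] [Finite G] [DecidableEq G]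
    (hG : ∃ a b : G, a * b ≠ b * a)
    {V : Type*} [AddCommGroup V] [Module k V]
    (ρ : Representation k G V) (grading : G → Submodule k V)
    (hinternal : DirectSum.IsInternal grading)
    (hcompat : ∀ g h : G, (grading h).map (ρ g) = grading (g * h * g⁻¹))
    (g₀ : G)
    (hsupp : {g : G | grading g ≠ ⊥} = {x : G | ∃ h : G, h * g₀ * h⁻¹ = x})
    (hgen : Subgroup.closure {g : G | grading g ≠ ⊥} = ⊤)
    (N : Subgroup G) [N.Normal]
    (hker : ∀ g : G, g ∈ N ↔ ∀ v : V, ρ g v = v) :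
    ∃ a b : G ⧸ N, a * b ≠ b * a :=
  quotient_by_kernel_nonabelian_general hG ρ grading hinternal hcompat g₀ hsupp hgen N hker
end

section
/- Let k be a field, G a group, and Γ a normal subgroup of G. Then the kernel of the k-algebra homomorphism k[G] → k[G/Γ] induced by the quotient map G → G/Γ equals the left ideal of k[G] generated by {γ − 1 : γ ∈ Γ}, and this left ideal is a two-sided ideal. Moreover, if k has characteristic p > 0 and Γ is a finite p-group, then this kernel is a nilpotent ideal. -/
/-!
Modulo the elements `g (γ - 1)`, every group element may be replaced by a fixed representative of
its coset, so the kernel of `k[G] → k[G/Γ]` is `k[G]·Δ` with `Δ` the `k`-span of the `γ - 1`.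
Normality gives `(γ - 1) g = g (g⁻¹γg - 1)`, so `Δ k[G] ⊆ k[G] Δ`, the left ideal is two-sided and
`(k[G] Δ)ⁿ ⊆ k[G] Δⁿ`. For abelian `Γ`, `Δ` lies in the image of the ideal of the commutative ring
`k[Γ]` generated by the finitely many nilpotents `γ - 1` (`(γ - 1)^(p^e) = γ^(p^e) - 1` in
characteristic `p`), so `Δ` is nilpotent. In general one inducts on `|Γ|` through the centre `Z` of
`Γ`: the kernel for `Γ/Z ⊴ G/Z` is nilpotent, so some power of the kernel for `Γ` lies in the
kernel for `Z`, which is nilpotent by the abelian case.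
-/

open MonoidAlgebra

theorem Submodule.top_mul_pow_le {R A : Type*} [CommSemiring R] [Semiring A] [Algebra R A]
    {M : Submodule R A} (hM : M * ⊤ ≤ ⊤ * M) (n : ℕ) : (⊤ * M) ^ n ≤ ⊤ * M ^ n := by
  induction n with
  | zero => simp
  | succ n ih =>
    calc (⊤ * M) ^ (n + 1) = ⊤ * M * (⊤ * M) ^ n := pow_succ' _ _
      _ ≤ ⊤ * M * (⊤ * M ^ n) := by gcongr
      _ = ⊤ * (M * ⊤) * M ^ n := by simp only [mul_assoc]
      _ ≤ ⊤ * (⊤ * M) * M ^ n := by gcongr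
      _ = ⊤ * ⊤ * M ^ (n + 1) := by simp only [mul_assoc, pow_succ']
      _ ≤ ⊤ * M ^ (n + 1) := by gcongr; exact le_top

theorem Submodule.isNilpotent_top_mul {R A : Type*} [CommSemiring R] [Semiring A] [Algebra R A]
    {M : Submodule R A} (hM : M * ⊤ ≤ ⊤ * M) (hnil : IsNilpotent M) : IsNilpotent (⊤ * M) := by
  obtain ⟨n, hn⟩ := hnil
  exact ⟨n, le_bot_iff.mp <| (top_mul_pow_le hM n).trans <| by rw [hn, mul_zero]; rfl⟩

theorem Subgroup.card_mul_card_map_mk' {G : Type*} [Group G] {N Γ : Subgroup G} [N.Normal]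
    (h : N ≤ Γ) : Nat.card N * Nat.card (Γ.map (QuotientGroup.mk' N)) = Nat.card Γ := by
  have := relIndex_inf_mul_relIndex ⊥ (QuotientGroup.mk' N).ker Γ
  rwa [relIndex_ker, bot_inf_eq, relIndex_bot_left, relIndex_bot_left, QuotientGroup.ker_mk',
    inf_of_le_left h] at this

namespace MonoidAlgebra

theorem span_range_of {k G : Type*} [Semiring k] [Monoid G] :
    Submodule.span k (Set.range (of k G)) = ⊤ := by
  convert (basis G k).span_eq
  ext g
  simp [basis_apply, of_apply]

variable {k : Type*} [CommRing k] {G : Type*} [Group G]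

variable (k) in
def ofSubOne (N : Subgroup G) : Set (MonoidAlgebra k G) :=
  {a | ∃ γ ∈ N, a = of k G γ - 1}

variable (k) in
-- A `k`-submodule rather than an `Ideal`, so that its powers live in the semiring
-- `Submodule k k[G]`, where `Submodule.map_pow` is available.
noncomputable def relAugmentation (N : Subgroup G) : Submodule k (MonoidAlgebra k G) :=
  ⊤ * Submodule.span k (ofSubOne k N)

theorem relAugmentation_le_span (N : Subgroup G) :
    relAugmentation k N ≤ (Ideal.span (ofSubOne k N)).restrictScalars k :=
  Submodule.mul_le.mpr fun a _ _ hs ↦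
    Ideal.mul_mem_left _ a (Submodule.span_le_restrictScalars k _ _ hs)

theorem ofSubOne_subset_ker (N : Subgroup G) [N.Normal] :
    ofSubOne k N ⊆ RingHom.ker (mapDomainRingHom k (QuotientGroup.mk' N)) := by
  rintro _ ⟨γ, hγ, rfl⟩
  rw [SetLike.mem_coe, RingHom.mem_ker, map_sub, map_one, mapDomainRingHom_apply, of_apply,
    mapDomain_single, QuotientGroup.mk'_apply, (QuotientGroup.eq_one_iff γ).mpr hγ, ← one_def,
    sub_self]

theorem sub_mapDomain_out_mem_relAugmentation (N : Subgroup G) [N.Normal]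
    (x : MonoidAlgebra k G) :
    x - mapDomain Quotient.out (mapDomainRingHom k (QuotientGroup.mk' N) x) ∈
      relAugmentation k N := by
  induction x using induction_linear with
  | zero => simp
  | add x y hx hy =>
    rw [map_add, mapDomain_add, add_sub_add_comm]
    exact add_mem hx hy
  | single g c =>
    set a : G := Quotient.out (QuotientGroup.mk' N g)
    have ha : a⁻¹ * g ∈ N := QuotientGroup.eq.mp (QuotientGroup.out_eq' _)
    have : single g c - single a c = single a c * (of k G (a⁻¹ * g) - 1) := by
      rw [mul_sub, mul_one, of_apply, single_mul_single, mul_one, mul_inv_cancel_left]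
    simp only [mapDomainRingHom_apply, mapDomain_single]
    rw [this]
    exact Submodule.mul_mem_mul Submodule.mem_top (Submodule.subset_span ⟨_, ha, rfl⟩)

theorem restrictScalars_ker_mapDomainRingHom_mk' (N : Subgroup G) [N.Normal] :
    (RingHom.ker (mapDomainRingHom k (QuotientGroup.mk' N))).restrictScalars k =
      relAugmentation k N := by
  refine le_antisymm (fun x hx ↦ ?_) (Submodule.mul_le.mpr fun a _ s hs ↦ ?_)
  · simpa [(RingHom.mem_ker).mp hx] using sub_mapDomain_out_mem_relAugmentation N x
  · exact Ideal.mul_mem_left _ a <|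
      Ideal.span_le.mpr (ofSubOne_subset_ker N) (Submodule.span_le_restrictScalars k _ _ hs)

theorem ker_mapDomainRingHom_mk' (N : Subgroup G) [N.Normal] :
    RingHom.ker (mapDomainRingHom k (QuotientGroup.mk' N)) = Ideal.span (ofSubOne k N) :=
  le_antisymm
    (fun _ hx ↦ relAugmentation_le_span N ((restrictScalars_ker_mapDomainRingHom_mk' N).le hx))
    (Ideal.span_le.mpr (ofSubOne_subset_ker N))

theorem map_relAugmentation_le {H : Type*} [Group H] (f : G →* H) (Γ : Subgroup G) :
    (relAugmentation k Γ).map (mapDomainAlgHom k k f).toLinearMap ≤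
      relAugmentation k (Γ.map f) := by
  rw [relAugmentation, relAugmentation, Submodule.map_mul, Submodule.map_span]
  gcongr
  · exact le_top
  · rintro _ ⟨_, ⟨γ, hγ, rfl⟩, rfl⟩
    refine ⟨f γ, Subgroup.mem_map_of_mem f hγ, ?_⟩
    show mapDomainAlgHom k k f (of k G γ - 1) = _
    rw [map_sub, map_one]
    simp [of_apply]

theorem relAugmentation_pow_le {N Γ : Subgroup G} [N.Normal] {m : ℕ}
    (hm : relAugmentation k (Γ.map (QuotientGroup.mk' N)) ^ m = ⊥) :
    relAugmentation k Γ ^ m ≤ relAugmentation k N := by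
  let φ := mapDomainAlgHom k k (QuotientGroup.mk' N)
  rw [← restrictScalars_ker_mapDomainRingHom_mk' N]
  intro x hx
  have hφx : φ x ∈ relAugmentation k (Γ.map (QuotientGroup.mk' N)) ^ m := by
    have := Submodule.mem_map_of_mem (f := φ.toLinearMap) hx
    rw [Submodule.map_pow] at this
    exact pow_le_pow_left' (map_relAugmentation_le _ Γ) m this
  rwa [hm, Submodule.mem_bot] at hφx

theorem span_ofSubOne_mul_top_le (N : Subgroup G) [N.Normal] :
    Submodule.span k (ofSubOne k N) * ⊤ ≤ ⊤ * Submodule.span k (ofSubOne k N) := by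
  rw [← span_range_of, Submodule.span_mul_span, Submodule.span_mul_span]
  refine Submodule.span_mono ?_
  rintro _ ⟨_, ⟨ν, hν, rfl⟩, _, ⟨g, rfl⟩, rfl⟩
  refine ⟨of k G g, ⟨g, rfl⟩, of k G (g⁻¹ * ν * g) - 1,
    ⟨_, by simpa using ‹N.Normal›.conj_mem ν hν g⁻¹, rfl⟩, ?_⟩
  simp only [mul_sub, sub_mul, ← map_mul, mul_one, one_mul, mul_assoc, mul_inv_cancel_left]

variable {p : ℕ} [Fact p.Prime] [CharP k p]

theorem isNilpotent_ideal_span_range_of_sub_one {A : Type*} [CommGroup A] [Finite A]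
    (hA : IsPGroup p A) :
    IsNilpotent (Ideal.span (Set.range fun a : A ↦ of k A a - 1)) := by
  have : CharP (MonoidAlgebra k A) p := charP_of_injective_algebraMap' k p
  refine (Ideal.FG.isNilpotent_iff_le_nilradical (Submodule.fg_span (Set.finite_range _))).mpr ?_
  rw [Ideal.span_le]
  rintro _ ⟨a, rfl⟩
  obtain ⟨n, hn⟩ := hA a
  exact mem_nilradical.mpr
    ⟨p ^ n, by rw [sub_pow_char_pow, ← map_pow, hn, map_one, one_pow, sub_self]⟩

open scoped IsMulCommutative in
theorem isNilpotent_span_ofSubOne (N : Subgroup G) [IsMulCommutative N] [Finite N]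
    (hN : IsPGroup p N) :
    IsNilpotent (Submodule.span k (ofSubOne k N)) := by
  obtain ⟨n, hn⟩ := isNilpotent_ideal_span_range_of_sub_one (k := k) hN
  let ι := mapDomainAlgHom k k N.subtype
  let I := Ideal.span (Set.range fun a : N ↦ of k N a - 1)
  have hle : Submodule.span k (ofSubOne k N) ≤ (I.restrictScalars k).map ι.toLinearMap := by
    rw [Submodule.span_le]
    rintro _ ⟨ν, hν, rfl⟩
    refine ⟨of k N ⟨ν, hν⟩ - 1, Ideal.subset_span ⟨_, rfl⟩, ?_⟩
    show ι _ = _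
    rw [map_sub, map_one]
    simp [ι, of_apply]
  refine ⟨n + 1, le_bot_iff.mp ?_⟩
  calc Submodule.span k (ofSubOne k N) ^ (n + 1)
      ≤ ((I.restrictScalars k).map ι.toLinearMap) ^ (n + 1) := pow_le_pow_left' hle _
    _ = ((I ^ (n + 1)).restrictScalars k).map ι.toLinearMap := by
        rw [← Submodule.map_pow, Submodule.restrictScalars_pow n.succ_ne_zero]
    _ = ⊥ := by rw [pow_succ, hn, zero_mul, Submodule.zero_eq_bot]; simp

theorem isNilpotent_relAugmentation_of_isMulCommutative (N : Subgroup G) [N.Normal]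
    [IsMulCommutative N] [Finite N] (hN : IsPGroup p N) :
    IsNilpotent (relAugmentation k N) :=
  Submodule.isNilpotent_top_mul (span_ofSubOne_mul_top_le N) (isNilpotent_span_ofSubOne N hN)

theorem isNilpotent_relAugmentation (Γ : Subgroup G) [Γ.Normal] [Finite Γ] (hΓ : IsPGroup p Γ) :
    IsNilpotent (relAugmentation k Γ) := by
  induction h : Nat.card Γ using Nat.strong_induction_on generalizing G with
  | _ n ih =>
    rcases subsingleton_or_nontrivial Γ with _ | _
    · have : IsMulCommutative Γ := ⟨⟨fun _ _ ↦ Subsingleton.elim _ _⟩⟩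
      exact isNilpotent_relAugmentation_of_isMulCommutative Γ hΓ
    -- The centre `N` of `Γ` is characteristic in `Γ`, hence normal in `G`.
    set N : Subgroup G := (Subgroup.center Γ).map Γ.subtype
    have hNΓ : N ≤ Γ := Subgroup.map_subtype_le _
    have : Finite N := Finite.of_injective _ (Subgroup.inclusion_injective hNΓ)
    have hN : 1 < Nat.card N := by
      have := hΓ.center_nontrivial
      rw [Subgroup.card_map_of_injective Γ.subtype_injective]
      exact Finite.one_lt_card_iff_nontrivial.mpr this
    set Γ' := Γ.map (QuotientGroup.mk' N)
    have : Γ'.Normal := ‹Γ.Normal›.map _ (QuotientGroup.mk'_surjective N)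
    have : Finite Γ' := Finite.of_surjective _ ((QuotientGroup.mk' N).subgroupMap_surjective Γ)
    have hlt : Nat.card Γ' < n := by
      rw [← h, ← Subgroup.card_mul_card_map_mk' hNΓ]
      exact lt_mul_left Nat.card_pos hN
    obtain ⟨m, hm⟩ := ih _ hlt Γ' (hΓ.map _) rfl
    obtain ⟨t, ht⟩ :=
      isNilpotent_relAugmentation_of_isMulCommutative (k := k) N ((hΓ.to_subgroup _).map Γ.subtype)
    refine ⟨m * t, le_bot_iff.mp ?_⟩
    rw [pow_mul]
    exact (pow_le_pow_left' (relAugmentation_pow_le hm) t).trans ht.le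

end MonoidAlgebra

/-- Let `k` be a field, `G` a group and `Γ` a normal subgroup of `G`. The
kernel of the induced algebra map `k[G] → k[G/Γ]` is the left ideal generated by
`{γ - 1 : γ ∈ Γ}`, and this left ideal is two-sided. Moreover, if `char k = p > 0` and `Γ`
is a finite `p`-group, then this kernel is a nilpotent ideal (some power of it, i.e. all
products of some fixed number `n ≥ 1` of its elements, vanish). -/
theorem ker_mapDomain_eq_span_and_nilpotent
    {k : Type*} [Field k] {G : Type*} [Group G] (Γ : Subgroup G) [Γ.Normal] :
    RingHom.ker (MonoidAlgebra.mapDomainRingHom k (QuotientGroup.mk' Γ)) =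
      Ideal.span {a : MonoidAlgebra k G | ∃ γ ∈ Γ, a = MonoidAlgebra.of k G γ - 1} ∧
    (∀ a ∈ Ideal.span {a : MonoidAlgebra k G | ∃ γ ∈ Γ, a = MonoidAlgebra.of k G γ - 1},
      ∀ r : MonoidAlgebra k G,
        a * r ∈ Ideal.span {a : MonoidAlgebra k G | ∃ γ ∈ Γ, a = MonoidAlgebra.of k G γ - 1}) ∧
    (∀ p : ℕ, p.Prime → CharP k p → Finite Γ → IsPGroup p Γ →
      ∃ n : ℕ, 0 < n ∧ ∀ f : Fin n → MonoidAlgebra k G,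
        (∀ i : Fin n,
          f i ∈ RingHom.ker (MonoidAlgebra.mapDomainRingHom k (QuotientGroup.mk' Γ))) →
        (List.ofFn f).prod = 0) := by
  have hker := ker_mapDomainRingHom_mk' (k := k) Γ
  unfold ofSubOne at hker
  refine ⟨hker, fun a ha r ↦ ?_, fun p hp _ _ hΓ ↦ ?_⟩
  · rw [← hker, RingHom.mem_ker] at ha ⊢
    rw [map_mul, ha, zero_mul]
  · have : Fact p.Prime := ⟨hp⟩
    obtain ⟨n, hn⟩ := isNilpotent_relAugmentation (k := k) Γ hΓ
    refine ⟨n + 1, n.succ_pos, fun f hf ↦ ?_⟩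
    have hprod : (List.ofFn f).prod ∈ relAugmentation k Γ ^ (n + 1) :=
      Submodule.pow_subset_pow _ <| Set.mem_pow.mpr
        ⟨fun i ↦ ⟨f i, restrictScalars_ker_mapDomainRingHom_mk' (k := k) Γ ▸ hf i⟩, rfl⟩
    rwa [pow_succ, hn, zero_mul, Submodule.zero_eq_bot, Submodule.mem_bot] at hprod
end

section
/- Let k be a field, G a finite group, Γ a normal subgroup of G, and V a Yetter–Drinfeld module over kG with support X. Let Γ act on X by conjugation, and let T ⊆ X be a set containing exactly one element of each Γ-orbit. For x ∈ X write C_Γ(x) for the centralizer of x in Γ and H_0(C_Γ(x), V_x) = V_x / span_k{(γ − 1)·v : γ ∈ C_Γ(x), v ∈ V_x}. Then there is a k-linear isomorphism V / span_k{(γ − 1)·v : γ ∈ Γ, v ∈ V} ≅ ⊕_{x ∈ T} H_0(C_Γ(x), V_x). Moreover, if the kernel of the induced algebra map k[G] → k[G/Γ] is a nilpotent ideal, then H_0(C_Γ(x), V_x) ≠ 0 for every x ∈ X. -/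
/-!
A vector `v ∈ V_g` is congruent, modulo the relations `(γ - 1)·w` with `γ ∈ Γ`, to `ρ δ v ∈ V_x`,
where `x = δ g δ⁻¹` is the representative in `T` of the `Γ`-orbit of `g`. Two choices of `δ`
differ by an element of `C_Γ(x)`, so `v ↦ [ρ δ v] ∈ H₀(C_Γ(x), V_x)` is well defined, and it
inverts the map induced by the inclusions `V_x ⊆ V`.

Each `γ - 1` with `γ ∈ Γ` lies in the kernel `I` of `k[G] → k[G/Γ]`. Hence
`H₀(C_Γ(x), V_x) = 0` gives `V_x ⊆ I·V_x ⊆ I^n·V_x = 0`.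
-/

open scoped DirectSum Pointwise
open Submodule

namespace Submodule

variable {k V : Type*} [Semiring k] [AddCommMonoid V] [Module k V]

theorem span_smul_span_le_span_smul (S : Set (Module.End k V)) (t : Set V) :
    span k (S • (span k t : Set V)) ≤ span k (S • t) := by
  rw [span_le]
  rintro _ ⟨f, hf, w, hw, rfl⟩
  have hft : f '' t ⊆ S • t := Set.image_subset_iff.mpr fun v hv => Set.smul_mem_smul hf hv
  exact span_mono hft (apply_mem_span_image_of_mem_span f hw)

theorem eq_bot_of_le_span_smul_of_pow_subset_zero {S : Set (Module.End k V)} {n : ℕ}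
    (hS : S ^ n ⊆ {0}) {N : Submodule k V} (hN : N ≤ span k (S • (N : Set V))) : N = ⊥ := by
  have hpow : ∀ m, N ≤ span k (S ^ m • (N : Set V)) := by
    intro m
    induction m with
    | zero => simp
    | succ m ih =>
      calc N ≤ span k (S • (N : Set V)) := hN
        _ ≤ span k (S • (span k (S ^ m • (N : Set V)) : Set V)) :=
          span_mono (Set.smul_subset_smul_left ih)
        _ ≤ span k (S • S ^ m • (N : Set V)) := span_smul_span_le_span_smul S _
        _ = span k (S ^ (m + 1) • (N : Set V)) := by rw [pow_succ', Set.mulAction.mul_smul]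
  refine eq_bot_iff.mpr ((hpow n).trans (span_le.mpr ?_))
  rintro _ ⟨f, hf, v, -, rfl⟩
  simp [Set.mem_singleton_iff.mp (hS hf)]

end Submodule

theorem MonoidAlgebra.single_sub_one_mem_ker_mapDomainRingHom {k G : Type*} [Ring k]
    [Group G] (Γ : Subgroup G) [Γ.Normal] {γ : G} (hγ : γ ∈ Γ) :
    single γ (1 : k) - 1 ∈ RingHom.ker (mapDomainRingHom k (QuotientGroup.mk' Γ)) := by
  rw [RingHom.mem_ker, map_sub, map_one, mapDomainRingHom_apply, mapDomain_single,
    QuotientGroup.mk'_apply, (QuotientGroup.eq_one_iff γ).mpr hγ, sub_eq_zero]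
  rfl

lemma DirectSum.IsInternal.linearMap_ext {R M N ι : Type*} [Semiring R] [AddCommMonoid M]
    [Module R M] [AddCommMonoid N] [Module R N] [DecidableEq ι] {A : ι → Submodule R M}
    (hA : DirectSum.IsInternal A) {f f' : M →ₗ[R] N} (h : ∀ i, ∀ v ∈ A i, f v = f' v) :
    f = f' :=
  LinearMap.ext_on (s := ⋃ i, (A i : Set M))
    (by rw [← iSup_eq_span, hA.submodule_iSup_eq_top])
    fun v hv => by
      obtain ⟨i, hv⟩ := Set.mem_iUnion.mp hv
      exact h i v hv

namespace YetterDrinfeld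

variable {k G V : Type*} [CommRing k] [Group G] [AddCommGroup V] [Module k V]
  (Γ : Subgroup G) (ρ : Representation k G V) (grading : G → Submodule k V)

def IsYetterDrinfeld : Prop :=
  ∀ g h : G, (grading h).map (ρ g) = grading (g * h * g⁻¹)

def IsTransversal (T : Set G) : Prop :=
  ∀ x : G, grading x ≠ ⊥ → ∃! y : G, y ∈ T ∧ ∃ γ ∈ Γ, γ * x * γ⁻¹ = y

def coinvariantsKer : Submodule k V :=
  span k {w : V | ∃ γ ∈ Γ, ∃ v : V, w = ρ γ v - v}

def localCoinvariantsKer (x : G) : Submodule k V :=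
  span k {w : V | ∃ γ ∈ Subgroup.centralizer {x} ⊓ Γ, ∃ v ∈ grading x, w = ρ γ v - v}

abbrev LocalCoinvariants (x : G) : Type _ :=
  grading x ⧸ (localCoinvariantsKer Γ ρ grading x).comap (grading x).subtype

-- Without this shortcut, unifying the two additive structures on `⨁ x : T, LocalCoinvariants …`
-- (e.g. when taking `liftQ` into it) times out.
instance (x : G) : AddCommGroup (LocalCoinvariants Γ ρ grading x) :=
  Submodule.Quotient.addCommGroup _

lemma localCoinvariantsKer_le_coinvariantsKer (x : G) :
    localCoinvariantsKer Γ ρ grading x ≤ coinvariantsKer Γ ρ :=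
  span_mono fun _ ⟨γ, hγ, v, _, hw⟩ => ⟨γ, (Subgroup.mem_inf.mp hγ).2, v, hw⟩

variable {Γ ρ grading}

lemma IsYetterDrinfeld.apply_mem (hρ : IsYetterDrinfeld ρ grading) {g x : G} {v : V}
    (hv : v ∈ grading g) {δ : G} (hδ : δ * g * δ⁻¹ = x) : ρ δ v ∈ grading x :=
  hδ ▸ hρ δ g ▸ mem_map_of_mem hv

lemma IsYetterDrinfeld.sub_mem_localCoinvariantsKer (hρ : IsYetterDrinfeld ρ grading) {g x γ δ : G}
    (hγ : γ ∈ Γ) (hδ : δ ∈ Γ) (hγx : γ * g * γ⁻¹ = x) (hδx : δ * g * δ⁻¹ = x)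
    {v : V} (hv : v ∈ grading g) :
    ρ γ v - ρ δ v ∈ localCoinvariantsKer Γ ρ grading x := by
  have hcomm : γ * δ⁻¹ ∈ Subgroup.centralizer {x} := by
    rw [Subgroup.mem_centralizer_singleton_iff]
    conv_lhs => rw [← hδx]
    conv_rhs => rw [← hγx]
    group
  refine subset_span ⟨γ * δ⁻¹, Subgroup.mem_inf.mpr ⟨hcomm, Γ.mul_mem hγ (Γ.inv_mem hδ)⟩, ρ δ v,
    hρ.apply_mem hv hδx, ?_⟩
  rw [map_mul, Module.End.mul_apply, ← Module.End.mul_apply (ρ δ⁻¹), ← map_mul, inv_mul_cancel,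
    map_one, Module.End.one_apply]

variable (Γ) in
def conjToLocal (hρ : IsYetterDrinfeld ρ grading) {g x : G} (δ : G) (hδ : δ * g * δ⁻¹ = x) :
    grading g →ₗ[k] LocalCoinvariants Γ ρ grading x :=
  mkQ _ ∘ₗ (ρ δ).restrict fun _ hv => hρ.apply_mem hv hδ

lemma conjToLocal_apply (hρ : IsYetterDrinfeld ρ grading) {g x : G} (δ : G) (hδ : δ * g * δ⁻¹ = x)
    (v : grading g) :
    conjToLocal Γ hρ δ hδ v = Submodule.Quotient.mk ⟨ρ δ v, hρ.apply_mem v.2 hδ⟩ :=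
  rfl

lemma conjToLocal_eq (hρ : IsYetterDrinfeld ρ grading) {g x γ δ : G} (hγ : γ ∈ Γ) (hδ : δ ∈ Γ)
    (hγx : γ * g * γ⁻¹ = x) (hδx : δ * g * δ⁻¹ = x) :
    conjToLocal Γ hρ γ hγx = conjToLocal Γ hρ δ hδx := by
  ext v
  exact (Submodule.Quotient.eq _).mpr (hρ.sub_mem_localCoinvariantsKer hγ hδ hγx hδx v.2)

section Transversal

variable [DecidableEq G]

variable (Γ) in
open Classical in
noncomputable def toLocalAt (hρ : IsYetterDrinfeld ρ grading) (T : Set G) (g : G) :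
    grading g →ₗ[k] ⨁ x : T, LocalCoinvariants Γ ρ grading x :=
  if h : ∃ x ∈ T, ∃ δ ∈ Γ, δ * g * δ⁻¹ = x then
    DirectSum.lof k T (fun x => LocalCoinvariants Γ ρ grading x) ⟨h.choose, h.choose_spec.1⟩ ∘ₗ
      conjToLocal Γ hρ h.choose_spec.2.choose h.choose_spec.2.choose_spec.2
  else 0

lemma toLocalAt_apply (hρ : IsYetterDrinfeld ρ grading) {T : Set G} (hT : IsTransversal Γ grading T)
    {g x δ : G} (hx : x ∈ T) (hδ : δ ∈ Γ) (hδx : δ * g * δ⁻¹ = x) (v : grading g) :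
    toLocalAt Γ hρ T g v =
      DirectSum.lof k T (fun x => LocalCoinvariants Γ ρ grading x) ⟨x, hx⟩
        (conjToLocal Γ hρ δ hδx v) := by
  by_cases hg : grading g = ⊥
  · obtain rfl : v = 0 := Subtype.ext ((Submodule.eq_bot_iff _).mp hg v v.2)
    simp only [map_zero]
  have h : ∃ x ∈ T, ∃ δ ∈ Γ, δ * g * δ⁻¹ = x := ⟨x, hx, δ, hδ, hδx⟩
  obtain rfl : x = h.choose := (hT g hg).unique ⟨hx, δ, hδ, hδx⟩ ⟨h.choose_spec.1, h.choose_spec.2⟩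
  rw [toLocalAt, dif_pos h, conjToLocal_eq hρ hδ h.choose_spec.2.choose_spec.1 hδx
    h.choose_spec.2.choose_spec.2]
  rfl

variable (Γ) in
noncomputable def toLocal (hinternal : DirectSum.IsInternal grading)
    (hρ : IsYetterDrinfeld ρ grading) (T : Set G) :
    V →ₗ[k] ⨁ x : T, LocalCoinvariants Γ ρ grading x :=
  DirectSum.toModule k G _ (toLocalAt Γ hρ T) ∘ₗ
    (LinearEquiv.ofBijective (DirectSum.coeLinearMap grading) hinternal).symm.toLinearMap

lemma toLocal_apply (hinternal : DirectSum.IsInternal grading) (hρ : IsYetterDrinfeld ρ grading)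
    {T : Set G} (hT : IsTransversal Γ grading T) {g x δ : G} (hx : x ∈ T) (hδ : δ ∈ Γ)
    (hδx : δ * g * δ⁻¹ = x) {v : V} (hv : v ∈ grading g) :
    toLocal Γ hinternal hρ T v =
      DirectSum.lof k T (fun x => LocalCoinvariants Γ ρ grading x) ⟨x, hx⟩
        (conjToLocal Γ hρ δ hδx ⟨v, hv⟩) := by
  have hsymm : (LinearEquiv.ofBijective (DirectSum.coeLinearMap grading) hinternal).symm v =
      DirectSum.lof k G (fun g => grading g) g ⟨v, hv⟩ := by
    rw [LinearEquiv.symm_apply_eq]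
    exact (DirectSum.coeLinearMap_of grading g ⟨v, hv⟩).symm
  rw [toLocal, LinearMap.comp_apply, LinearEquiv.coe_coe, hsymm, DirectSum.toModule_lof,
    toLocalAt_apply hρ hT hx hδ hδx]

lemma coinvariantsKer_le_ker_toLocal (hinternal : DirectSum.IsInternal grading)
    (hρ : IsYetterDrinfeld ρ grading) {T : Set G} (hT : IsTransversal Γ grading T) :
    coinvariantsKer Γ ρ ≤ LinearMap.ker (toLocal Γ hinternal hρ T) := by
  rw [coinvariantsKer, span_le]
  rintro _ ⟨γ, hγ, v, rfl⟩
  suffices toLocal Γ hinternal hρ T ∘ₗ ρ γ = toLocal Γ hinternal hρ T by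
    rw [SetLike.mem_coe, LinearMap.mem_ker, map_sub, sub_eq_zero]
    exact LinearMap.congr_fun this v
  refine hinternal.linearMap_ext fun g u hu => ?_
  by_cases hg : grading g = ⊥
  · rw [(Submodule.eq_bot_iff _).mp hg u hu, map_zero, map_zero]
  obtain ⟨x, hx, δ, hδ, hδx⟩ := (hT g hg).exists
  have hγδx : (δ * γ⁻¹) * (γ * g * γ⁻¹) * (δ * γ⁻¹)⁻¹ = x := by rw [← hδx]; group
  rw [LinearMap.comp_apply, toLocal_apply hinternal hρ hT hx hδ hδx hu,
    toLocal_apply hinternal hρ hT hx (Γ.mul_mem hδ (Γ.inv_mem hγ)) hγδx (hρ.apply_mem hu rfl)]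
  congr 1
  rw [conjToLocal_apply, conjToLocal_apply]
  congr 2
  rw [← Module.End.mul_apply, ← map_mul, inv_mul_cancel_right]

variable (Γ ρ grading) in
noncomputable def ofLocal (T : Set G) :
    (⨁ x : T, LocalCoinvariants Γ ρ grading x) →ₗ[k] V ⧸ coinvariantsKer Γ ρ :=
  DirectSum.toModule k T _ fun x =>
    mapQ _ _ (grading x).subtype
      (comap_mono (localCoinvariantsKer_le_coinvariantsKer Γ ρ grading x))

lemma ofLocal_lof_mk {T : Set G} (x : T) (v : grading x) :
    ofLocal Γ ρ grading T
      (DirectSum.lof k T (fun x => LocalCoinvariants Γ ρ grading x) x (Submodule.Quotient.mk v)) =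
      Submodule.Quotient.mk (v : V) := by
  rw [ofLocal, DirectSum.toModule_lof, mapQ_apply, subtype_apply]

lemma toLocal_comp_ofLocal (hinternal : DirectSum.IsInternal grading)
    (hρ : IsYetterDrinfeld ρ grading) {T : Set G} (hT : IsTransversal Γ grading T) :
    (coinvariantsKer Γ ρ).liftQ (toLocal Γ hinternal hρ T)
      (coinvariantsKer_le_ker_toLocal hinternal hρ hT) ∘ₗ ofLocal Γ ρ grading T = LinearMap.id := by
  refine DirectSum.linearMap_ext _ fun x => linearMap_qext _ (LinearMap.ext fun v => ?_)
  have hx : 1 * (x : G) * 1⁻¹ = x := by group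
  simp only [LinearMap.comp_apply, mkQ_apply, ofLocal_lof_mk, liftQ_apply, LinearMap.id_apply,
    toLocal_apply hinternal hρ hT x.2 Γ.one_mem hx v.2, conjToLocal_apply, map_one]
  rfl

lemma ofLocal_comp_toLocal (hinternal : DirectSum.IsInternal grading)
    (hρ : IsYetterDrinfeld ρ grading) {T : Set G} (hT : IsTransversal Γ grading T) :
    ofLocal Γ ρ grading T ∘ₗ
      (coinvariantsKer Γ ρ).liftQ (toLocal Γ hinternal hρ T)
        (coinvariantsKer_le_ker_toLocal hinternal hρ hT) = LinearMap.id := by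
  refine linearMap_qext _ (hinternal.linearMap_ext fun g v hv => ?_)
  by_cases hg : grading g = ⊥
  · rw [(Submodule.eq_bot_iff _).mp hg v hv, map_zero, map_zero]
  obtain ⟨x, hx, δ, hδ, hδx⟩ := (hT g hg).exists
  rw [LinearMap.comp_apply, LinearMap.comp_apply, mkQ_apply, liftQ_apply,
    toLocal_apply hinternal hρ hT hx hδ hδx hv, conjToLocal_apply, ofLocal_lof_mk,
    LinearMap.id_comp, mkQ_apply, Submodule.Quotient.eq]
  exact subset_span ⟨δ, hδ, v, rfl⟩

variable (Γ) in
noncomputable def coinvariantsEquiv (hinternal : DirectSum.IsInternal grading)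
    (hρ : IsYetterDrinfeld ρ grading) {T : Set G} (hT : IsTransversal Γ grading T) :
    (V ⧸ coinvariantsKer Γ ρ) ≃ₗ[k] ⨁ x : T, LocalCoinvariants Γ ρ grading x :=
  .ofLinearMap
    ((coinvariantsKer Γ ρ).liftQ (toLocal Γ hinternal hρ T)
      (coinvariantsKer_le_ker_toLocal hinternal hρ hT))
    (ofLocal Γ ρ grading T) (toLocal_comp_ofLocal hinternal hρ hT)
    (ofLocal_comp_toLocal hinternal hρ hT)

end Transversal

lemma localCoinvariantsKer_le_span_smul [Γ.Normal] (x : G) :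
    localCoinvariantsKer Γ ρ grading x ≤
      span k ((ρ.asAlgebraHom '' RingHom.ker (MonoidAlgebra.mapDomainRingHom k
        (QuotientGroup.mk' Γ))) • (grading x : Set V)) := by
  refine span_mono ?_
  rintro _ ⟨γ, hγ, v, hv, rfl⟩
  refine ⟨ρ.asAlgebraHom (MonoidAlgebra.single γ 1 - 1),
    ⟨_, MonoidAlgebra.single_sub_one_mem_ker_mapDomainRingHom Γ (Subgroup.mem_inf.mp hγ).2, rfl⟩,
    v, hv, ?_⟩
  simp

theorem nontrivial_localCoinvariants [Γ.Normal] {n : ℕ}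
    (hnil : (RingHom.ker (MonoidAlgebra.mapDomainRingHom k (QuotientGroup.mk' Γ)) :
      Set (MonoidAlgebra k G)) ^ n ⊆ {0})
    {x : G} (hx : grading x ≠ ⊥) : Nontrivial (LocalCoinvariants Γ ρ grading x) := by
  rw [Submodule.Quotient.nontrivial_iff, Ne, comap_subtype_eq_top]
  refine fun hle => hx (eq_bot_of_le_span_smul_of_pow_subset_zero (n := n) ?_
    (hle.trans (localCoinvariantsKer_le_span_smul x)))
  rw [← Set.image_pow]
  rintro _ ⟨a, ha, rfl⟩
  rw [Set.mem_singleton_iff.mp (hnil ha), map_zero, Set.mem_singleton_iff]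

end YetterDrinfeld

theorem coinvariants_iso_and_nontrivial_general
    {k : Type*} [Field k] {G : Type*} [Group G] [DecidableEq G]
    (Γ : Subgroup G) [Γ.Normal]
    {V : Type*} [AddCommGroup V] [Module k V]
    (ρ : Representation k G V) (grading : G → Submodule k V)
    (hinternal : DirectSum.IsInternal grading)
    (hcompat : ∀ g h : G, (grading h).map (ρ g) = grading (g * h * g⁻¹))
    (T : Set G)
    (hT : ∀ x ∈ {g : G | grading g ≠ ⊥},
      ∃! y : G, y ∈ T ∧ ∃ γ ∈ Γ, γ * x * γ⁻¹ = y) :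
    Nonempty ((V ⧸ Submodule.span k {w : V | ∃ γ ∈ Γ, ∃ v : V, w = ρ γ v - v}) ≃ₗ[k]
      (⨁ x : T, (grading (x : G) ⧸ Submodule.comap (grading (x : G)).subtype
        (Submodule.span k {w : V | ∃ γ ∈ Subgroup.centralizer {(x : G)} ⊓ Γ,
          ∃ v ∈ grading (x : G), w = ρ γ v - v})))) ∧
    ((∃ n : ℕ, 0 < n ∧ ∀ f : Fin n → MonoidAlgebra k G,
        (∀ i : Fin n,
          f i ∈ RingHom.ker (MonoidAlgebra.mapDomainRingHom k (QuotientGroup.mk' Γ))) →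
        (List.ofFn f).prod = 0) →
      ∀ x : G, grading x ≠ ⊥ →
        Nontrivial (grading x ⧸ Submodule.comap (grading x).subtype
          (Submodule.span k {w : V | ∃ γ ∈ Subgroup.centralizer {x} ⊓ Γ,
            ∃ v ∈ grading x, w = ρ γ v - v}))) := by
  refine ⟨⟨YetterDrinfeld.coinvariantsEquiv Γ hinternal hcompat hT⟩, ?_⟩
  rintro ⟨n, -, hprod⟩ x hx
  refine YetterDrinfeld.nontrivial_localCoinvariants (n := n) (fun a ha => ?_) hx
  obtain ⟨f, rfl⟩ := Set.mem_pow.mp ha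
  exact hprod _ fun i => (f i).2

/-- Let `k` be a field, `G` a finite group, `Γ` a normal subgroup and `V`
a Yetter–Drinfeld module over `kG` with support `X`. Let `T ⊆ X` contain exactly one element
of each orbit of the conjugation action of `Γ` on `X`. Then the coinvariant space
`V / span{(γ - 1)·v}` is `k`-linearly isomorphic to `⊕_{x ∈ T} H₀(C_Γ(x), V_x)`.
Moreover, if the kernel of `k[G] → k[G/Γ]` is a nilpotent ideal, then
`H₀(C_Γ(x), V_x) ≠ 0` for every `x ∈ X`. -/
theorem coinvariants_iso_and_nontrivial
    {k : Type*} [Field k] {G : Type*} [Group G] [Finite G] [DecidableEq G]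
    (Γ : Subgroup G) [Γ.Normal]
    {V : Type*} [AddCommGroup V] [Module k V]
    (ρ : Representation k G V) (grading : G → Submodule k V)
    (hinternal : DirectSum.IsInternal grading)
    (hcompat : ∀ g h : G, (grading h).map (ρ g) = grading (g * h * g⁻¹))
    (T : Set G)
    (hT : ∀ x ∈ {g : G | grading g ≠ ⊥},
      ∃! y : G, y ∈ T ∧ ∃ γ ∈ Γ, γ * x * γ⁻¹ = y)
    (hTX : T ⊆ {g : G | grading g ≠ ⊥}) :
    Nonempty ((V ⧸ Submodule.span k {w : V | ∃ γ ∈ Γ, ∃ v : V, w = ρ γ v - v}) ≃ₗ[k]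
      (⨁ x : T, (grading (x : G) ⧸ Submodule.comap (grading (x : G)).subtype
        (Submodule.span k {w : V | ∃ γ ∈ Subgroup.centralizer {(x : G)} ⊓ Γ,
          ∃ v ∈ grading (x : G), w = ρ γ v - v})))) ∧
    ((∃ n : ℕ, 0 < n ∧ ∀ f : Fin n → MonoidAlgebra k G,
        (∀ i : Fin n,
          f i ∈ RingHom.ker (MonoidAlgebra.mapDomainRingHom k (QuotientGroup.mk' Γ))) →
        (List.ofFn f).prod = 0) →
      ∀ x : G, grading x ≠ ⊥ →
        Nontrivial (grading x ⧸ Submodule.comap (grading x).subtype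
          (Submodule.span k {w : V | ∃ γ ∈ Subgroup.centralizer {x} ⊓ Γ,
            ∃ v ∈ grading x, w = ρ γ v - v}))) :=
  coinvariants_iso_and_nontrivial_general Γ ρ grading hinternal hcompat T hT
end

section
/- Let X be a finite rack and G_X its enveloping group. Then the commutator subgroup [G_X, G_X] is finite. -/
/-!
The enveloping group `G` acts on `X` with `e_{g • x} = g e_x g⁻¹`. The kernel of this action has
finite index because `X` is finite, and it centralizes every generator, so it lies in the centre.
A commutator `⁅g, h⁆` only depends on `g` and `h` modulo the centre, so a centre of finite index
leaves only finitely many commutators, and Schur's theorem makes `[G, G]` finite.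
-/

open Subgroup
open scoped commutatorElement

section CenterFiniteIndex

variable {G : Type*} [Group G]

theorem commutatorElement_mul_mul_of_mem_center {g h z w : G} (hz : z ∈ center G)
    (hw : w ∈ center G) : ⁅g * z, h * w⁆ = ⁅g, h⁆ := by
  have conj_eq : ∀ {c : G}, c ∈ center G → ∀ y : G, c * y * c⁻¹ = y := fun hc y =>
    mul_inv_eq_of_eq_mul (mem_center_iff.mp hc y).symm
  calc ⁅g * z, h * w⁆ = g * (z * (h * w) * z⁻¹) * g⁻¹ * w⁻¹ * h⁻¹ := by group
    _ = g * h * (w * g⁻¹ * w⁻¹) * h⁻¹ := by rw [conj_eq hz]; group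
    _ = ⁅g, h⁆ := by rw [conj_eq hw, commutatorElement_def]

theorem finite_commutatorSet_of_finiteIndex_center [(center G).FiniteIndex] :
    Finite (commutatorSet G) := by
  refine Finite.Set.subset
    (Set.range fun p : (G ⧸ center G) × (G ⧸ center G) => ⁅p.1.out, p.2.out⁆) ?_
  rintro _ ⟨g, h, rfl⟩
  obtain ⟨z, hz⟩ := QuotientGroup.mk_out_eq_mul (center G) g
  obtain ⟨w, hw⟩ := QuotientGroup.mk_out_eq_mul (center G) h
  exact ⟨(g, h), by simp only [hz, hw, commutatorElement_mul_mul_of_mem_center z.2 w.2]⟩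

end CenterFiniteIndex

namespace Rack.EnvelGroup

variable {X : Type*} [Rack X]

theorem closure_range_toEnvelGroup :
    closure (Set.range (toEnvelGroup X) : Set (EnvelGroup X)) = ⊤ := by
  refine eq_top_iff.2 fun g _ => Quotient.inductionOn g fun a => ?_
  induction a with
  | unit => exact one_mem _
  | incl x => exact subset_closure ⟨x, rfl⟩
  | mul a b ha hb => exact mul_mem ha hb
  | inv a ha => exact inv_mem ha

theorem toEnvelGroup_envelAction (g : EnvelGroup X) (x : X) :
    toEnvelGroup X (envelAction g x) = g * toEnvelGroup X x * g⁻¹ := by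
  have hg : g ∈ closure (Set.range (toEnvelGroup X) : Set (EnvelGroup X)) := by
    rw [closure_range_toEnvelGroup]; exact mem_top g
  induction hg using closure_induction generalizing x with
  | mem _ h =>
    obtain ⟨y, rfl⟩ := h
    exact (toEnvelGroup X).map_act'
  | one => simp
  | mul a b _ _ ha hb => rw [map_mul, Equiv.Perm.mul_apply, ha, hb]; group
  | inv a _ ha =>
    have h := ha (envelAction a⁻¹ x)
    rw [← Equiv.Perm.mul_apply, ← map_mul, mul_inv_cancel, map_one, Equiv.Perm.one_apply] at h
    rw [h]; group

theorem ker_envelAction_le_center : (envelAction (R := X)).ker ≤ center (EnvelGroup X) := by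
  intro g hg
  have commute_gen : Set.range (toEnvelGroup X) ⊆ (centralizer {g} : Set (EnvelGroup X)) := by
    rintro _ ⟨x, rfl⟩
    rw [SetLike.mem_coe, mem_centralizer_singleton_iff, eq_comm, ← mul_inv_eq_iff_eq_mul,
      ← toEnvelGroup_envelAction, MonoidHom.mem_ker.mp hg, Equiv.Perm.one_apply]
  have h_top : ⊤ ≤ centralizer {g} :=
    closure_range_toEnvelGroup (X := X) ▸ (closure_le _).2 commute_gen
  exact mem_center_iff.2 fun h => mem_centralizer_singleton_iff.1 (h_top (mem_top h))

end Rack.EnvelGroup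

/-- Let `X` be a finite rack and `G_X` its enveloping group. Then the
commutator subgroup `[G_X, G_X]` is finite. -/
theorem commutator_envelGroup_finite
    (X : Type*) [Rack X] [Finite X] :
    Finite (commutator (Rack.EnvelGroup X)) := by
  have : (center (Rack.EnvelGroup X)).FiniteIndex :=
    finiteIndex_of_le Rack.EnvelGroup.ker_envelAction_le_center
  have := finite_commutatorSet_of_finiteIndex_center (G := Rack.EnvelGroup X)
  -- Schur's theorem, a Mathlib instance
  infer_instance
end

section
/- Let X be a finite indecomposable quandle, b ∈ X, G_X its enveloping group, and D_X = [G_X, G_X] its commutator subgroup. Then the element e_b has infinite order in G_X, the subgroups D_X and ⟨e_b⟩ intersect trivially, and together they generate G_X; hence G_X is the internal semidirect product of D_X by the infinite cyclic subgroup ⟨e_b⟩. -/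
/-!
The degree map `G_X → ℤ`, `e_x ↦ 1`, kills `D_X` and is injective on `⟨e_b⟩`, so `e_b` has
infinite order and `D_X ∩ ⟨e_b⟩ = 1`. Since `e_{x ▷ y} = e_x e_y e_x⁻¹`, all generators in one
`Inn X`-orbit have the same image in the abelianization; by indecomposability every `e_x` lies in
`D_X e_b`, and the `e_x` generate `G_X`.
-/

open Rack Quandles

namespace Rack.EnvelGroup

variable {R : Type*} [Rack R]

theorem closure_range_toEnvelGroup_s13 :
    Subgroup.closure (Set.range fun x : R => (toEnvelGroup R x : EnvelGroup R)) = ⊤ := by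
  refine (Subgroup.eq_top_iff' _).mpr fun g => ?_
  induction g using Quotient.inductionOn with
  | h a =>
    induction a with
    | unit => exact Subgroup.one_mem _
    | incl x => exact Subgroup.subset_closure ⟨x, rfl⟩
    | mul a b iha ihb => exact Subgroup.mul_mem _ iha ihb
    | inv a iha => exact Subgroup.inv_mem _ iha

theorem toEnvelGroup_act (x y : R) :
    (toEnvelGroup R (x ◃ y) : EnvelGroup R) =
      toEnvelGroup R x * toEnvelGroup R y * (toEnvelGroup R x : EnvelGroup R)⁻¹ :=
  (toEnvelGroup R).map_act'

noncomputable def degree : EnvelGroup R →* Multiplicative ℤ :=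
  toEnvelGroup.map
    { toFun := fun _ => Multiplicative.ofAdd 1
      map_act' := by simp }

@[simp]
theorem degree_toEnvelGroup (x : R) :
    degree (toEnvelGroup R x : EnvelGroup R) = Multiplicative.ofAdd 1 :=
  rfl

theorem not_isOfFinOrder_toEnvelGroup (x : R) :
    ¬IsOfFinOrder (toEnvelGroup R x : EnvelGroup R) := fun h => by
  have := degree.isOfFinOrder h
  rw [degree_toEnvelGroup] at this
  exact not_isOfFinOrder_of_isMulTorsionFree (by decide) this

theorem commutator_inf_zpowers_toEnvelGroup (x : R) :
    commutator (EnvelGroup R) ⊓ Subgroup.zpowers (toEnvelGroup R x : EnvelGroup R) = ⊥ := by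
  refine eq_bot_iff.mpr ?_
  rintro _ ⟨hcomm, k, rfl⟩
  have hdeg : degree ((toEnvelGroup R x : EnvelGroup R) ^ k) = 1 :=
    Abelianization.commutator_subset_ker degree hcomm
  rw [map_zpow, degree_toEnvelGroup, ← ofAdd_zsmul, smul_eq_mul, mul_one, ofAdd_eq_one] at hdeg
  simp [hdeg]

theorem map_toEnvelGroup_act {A : Type*} [CommGroup A] (f : EnvelGroup R →* A) (x y : R) :
    f (toEnvelGroup R (x ◃ y)) = f (toEnvelGroup R y) := by
  rw [toEnvelGroup_act, map_mul, map_mul, map_inv, mul_inv_cancel_comm]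

theorem map_toEnvelGroup_apply_of_mem_closure {A : Type*} [CommGroup A] (f : EnvelGroup R →* A)
    {σ : Equiv.Perm R} (hσ : σ ∈ Subgroup.closure (Set.range fun z : R => act' z)) (y : R) :
    f (toEnvelGroup R (σ y)) = f (toEnvelGroup R y) := by
  induction hσ using Subgroup.closure_induction generalizing y with
  | mem _ hτ => obtain ⟨z, rfl⟩ := hτ; exact map_toEnvelGroup_act f z y
  | one => rfl
  | mul σ τ _ _ ihσ ihτ => exact (ihσ (τ y)).trans (ihτ y)
  | inv σ _ ihσ => simpa using (ihσ (σ⁻¹ y)).symm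

theorem commutator_sup_zpowers_toEnvelGroup {b : R}
    (hb : ∀ x : R, ∃ σ ∈ Subgroup.closure (Set.range fun z : R => act' z), σ b = x) :
    commutator (EnvelGroup R) ⊔ Subgroup.zpowers (toEnvelGroup R b : EnvelGroup R) = ⊤ := by
  rw [eq_top_iff, ← closure_range_toEnvelGroup_s13, Subgroup.closure_le]
  rintro _ ⟨x, rfl⟩
  obtain ⟨σ, hσ, rfl⟩ := hb x
  have hquot : toEnvelGroup R (σ b) * (toEnvelGroup R b : EnvelGroup R)⁻¹ ∈
      commutator (EnvelGroup R) := by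
    rw [← Abelianization.ker_of, MonoidHom.mem_ker, map_mul, map_inv,
      map_toEnvelGroup_apply_of_mem_closure _ hσ, mul_inv_cancel]
  simpa using Subgroup.mul_mem_sup hquot (Subgroup.mem_zpowers (toEnvelGroup R b : EnvelGroup R))

end Rack.EnvelGroup

theorem envelGroup_semidirect_of_indecomposable_quandle_general
    {X : Type*} [Quandle X]
    (hindec : ∀ x y : X,
      ∃ σ ∈ Subgroup.closure (Set.range (fun z : X => Rack.act' z) : Set (Equiv.Perm X)),
        σ x = y)
    (b : X) :
    ¬ IsOfFinOrder ((Rack.toEnvelGroup X b : Quandle.Conj (Rack.EnvelGroup X)) :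
        Rack.EnvelGroup X) ∧
    commutator (Rack.EnvelGroup X) ⊓
      Subgroup.zpowers ((Rack.toEnvelGroup X b : Quandle.Conj (Rack.EnvelGroup X)) :
        Rack.EnvelGroup X) = ⊥ ∧
    commutator (Rack.EnvelGroup X) ⊔
      Subgroup.zpowers ((Rack.toEnvelGroup X b : Quandle.Conj (Rack.EnvelGroup X)) :
        Rack.EnvelGroup X) = ⊤ :=
  ⟨EnvelGroup.not_isOfFinOrder_toEnvelGroup b, EnvelGroup.commutator_inf_zpowers_toEnvelGroup b,
    EnvelGroup.commutator_sup_zpowers_toEnvelGroup (hindec b)⟩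

/-- Let `X` be a finite indecomposable quandle (the inner automorphism
group, generated by the translations `φ_x`, acts transitively on `X`), let `b ∈ X`, `G_X`
the enveloping group and `D_X = [G_X, G_X]`. Then `e_b` has infinite order in `G_X`,
`D_X ∩ ⟨e_b⟩ = 1` and `D_X ⊔ ⟨e_b⟩ = G_X`; hence `G_X` is the internal semidirect product
of `D_X` by the infinite cyclic subgroup `⟨e_b⟩`. -/
theorem envelGroup_semidirect_of_indecomposable_quandle
    {X : Type*} [Quandle X] [Finite X]
    (hindec : ∀ x y : X,
      ∃ σ ∈ Subgroup.closure (Set.range (fun z : X => Rack.act' z) : Set (Equiv.Perm X)),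
        σ x = y)
    (b : X) :
    ¬ IsOfFinOrder ((Rack.toEnvelGroup X b : Quandle.Conj (Rack.EnvelGroup X)) :
        Rack.EnvelGroup X) ∧
    commutator (Rack.EnvelGroup X) ⊓
      Subgroup.zpowers ((Rack.toEnvelGroup X b : Quandle.Conj (Rack.EnvelGroup X)) :
        Rack.EnvelGroup X) = ⊥ ∧
    commutator (Rack.EnvelGroup X) ⊔
      Subgroup.zpowers ((Rack.toEnvelGroup X b : Quandle.Conj (Rack.EnvelGroup X)) :
        Rack.EnvelGroup X) = ⊤ :=
  envelGroup_semidirect_of_indecomposable_quandle_general hindec b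
end

section
/- Let Γ be a finite abelian group, t a fixed-point free automorphism of Γ, X = Aff(Γ, t), G_X the enveloping group of X, and D_X = [G_X, G_X]. Then D_X is finite and nilpotent; moreover, if Γ is a p-group for a prime p, then D_X is a p-group. -/
/-
Write `e_x` for the generators of `G_X` and `g_x = e_x e_0⁻¹`. Conjugation by `e_0` sends `g_x`
to `g_{t x}`, and every `e_x` is `e_0` modulo the `g_x`, so the subgroup generated by the `g_x` is
normal with cyclic quotient; as `1 - t` is bijective, each `g_x` is a commutator `⁅e_u, e_0⁆`.
Hence this subgroup is `D_X`.

The `g_x` satisfy `g_{(1-t)u + w} = g_u g_w g_{tu}⁻¹`. Expanding `g_{(1-t)u + w}` in two ways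
shows that `g_u⁻¹ g_x g_y` is central whenever `(1-t)u = (1-t)x + (1-t)y`, so every `⁅g_x, g_y⁆`
is central, `g_a g_b ∈ g_{a+b} ⁅D_X, D_X⁆`, and `⁅g_x, g_w⁆` is additive in `x`, hence killed by
`|Γ|`. Thus `D_X = g(Γ) ⁅D_X, D_X⁆` with central commutator subgroup: `D_X` is nilpotent of class
at most 2, has at most `|Γ|²` commutators (so it is finite by Schur's theorem), and its exponent
divides `|Γ|²`.
-/

/-- The affine rack `Aff(Γ, t)` on an abelian group `Γ` with automorphism `t`:
`x ▷ y = (x - t x) + t y`. -/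
def affRack {Γ : Type*} [AddCommGroup Γ] (t : Γ ≃+ Γ) : Rack Γ where
  act x y := x - t x + t y
  self_distrib := by
    intro x y z
    simp only [map_add, map_sub]
    abel
  invAct x y := t.symm (y - x + t x)
  left_inv := by
    intro x y
    have h : x - t x + t y - x + t x = t y := by abel
    show t.symm (x - t x + t y - x + t x) = y
    rw [h, AddEquiv.symm_apply_apply]
  right_inv := by
    intro x y
    show x - t x + t (t.symm (y - x + t x)) = y
    rw [AddEquiv.apply_symm_apply]
    abel

open scoped commutatorElement

section CentralCommutators

open Subgroup

variable {G : Type*} [Group G]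

theorem commutatorElement_mul_left_of_mem_center {ξ : G} (hξ : ξ ∈ center G) (x y : G) :
    ⁅x * ξ, y⁆ = ⁅x, y⁆ := by
  rw [commutatorElement_mul_left_eq_conj_mul, commutatorElement_eq_one_iff_commute.2
    (mem_center_iff.1 hξ y : Commute y ξ).symm, mul_one, mul_inv_cancel, one_mul]

theorem commutatorElement_mul_right_of_mem_center {η : G} (hη : η ∈ center G) (x y : G) :
    ⁅x, y * η⁆ = ⁅x, y⁆ := by
  rw [← commutatorElement_inv, commutatorElement_mul_left_of_mem_center hη, commutatorElement_inv]

theorem commute_inv_mul_of_mul_mul_inv_eq {x x' y y' w : G} (hw : x * w * y⁻¹ = x' * w * y'⁻¹)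
    (h1 : x * y⁻¹ = x' * y'⁻¹) : Commute (x⁻¹ * x') w := by
  have hconj : x * w * x⁻¹ = x' * w * x'⁻¹ := by
    calc x * w * x⁻¹ = x * w * y⁻¹ * (x * y⁻¹)⁻¹ := by group
      _ = x' * w * y'⁻¹ * (x' * y'⁻¹)⁻¹ := by rw [hw, h1]
      _ = x' * w * x'⁻¹ := by group
  calc x⁻¹ * x' * w = x⁻¹ * (x' * w * x'⁻¹) * x' := by group
    _ = x⁻¹ * (x * w * x⁻¹) * x' := by rw [hconj]
    _ = w * (x⁻¹ * x') := by group

theorem pow_eq_one_of_mem_closure_of_subset_center {S : Set G} {n : ℕ} (hS : S ⊆ center G)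
    (hpow : ∀ s ∈ S, s ^ n = 1) {x : G} (hx : x ∈ closure S) : x ^ n = 1 := by
  have hcenter : closure S ≤ center G := (closure_le _).2 hS
  induction hx using closure_induction with
  | mem s hs => exact hpow s hs
  | one => exact one_pow n
  | mul y z hy hz ihy ihz =>
    rw [Commute.mul_pow (mem_center_iff.1 (hcenter hy) z).symm, ihy, ihz, one_mul]
  | inv y _ ihy => rw [inv_pow, ihy, inv_one]

theorem Group.isNilpotent_of_commutator_le_center (h : commutator G ≤ center G) :
    Group.IsNilpotent G :=
  Subgroup.isNilpotent_of_ker_le_center Abelianization.of (Abelianization.ker_of (G := G) ▸ h)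

theorem commutator_le_of_forall_mk_eq {N : Subgroup G} [N.Normal] {S : Set G}
    (hS : closure S = ⊤) (e : G) (he : ∀ x ∈ S, (x : G ⧸ N) = e) : commutator G ≤ N := by
  have hzpowers (x : G) : (x : G ⧸ N) ∈ zpowers (e : G ⧸ N) := by
    have hle : closure S ≤ (zpowers (e : G ⧸ N)).comap (QuotientGroup.mk' N) :=
      (closure_le _).2 fun x hx ↦ by simp [he x hx]
    exact hle (hS ▸ mem_top x)
  rw [commutator_eq_closure, closure_le]
  rintro _ ⟨x, y, rfl⟩
  obtain ⟨m, hm⟩ := hzpowers x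
  obtain ⟨n, hn⟩ := hzpowers y
  rw [SetLike.mem_coe, ← QuotientGroup.eq_one_iff, ← QuotientGroup.mk'_apply,
    map_commutatorElement, QuotientGroup.mk'_apply, QuotientGroup.mk'_apply, ← hm, ← hn,
    commutatorElement_eq_one_iff_commute]
  exact Commute.zpow_zpow_self _ m n

end CentralCommutators

/-- Models the elements `e_x e_0⁻¹` of `G_X`, with `s = 1 - t` and `r = t`. -/
structure AffineGenerators {K Γ : Type*} [Group K] [AddCommGroup Γ] (g : Γ → K) (s r : Γ → Γ) :
    Prop where
  closure_range : Subgroup.closure (Set.range g) = ⊤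
  surjective : Function.Surjective s
  map_zero : g 0 = 1
  map_add : ∀ u w, g (s u + w) = g u * g w * (g (r u))⁻¹

namespace AffineGenerators

open Subgroup

variable {K Γ : Type*} [Group K] [AddCommGroup Γ] {g : Γ → K} {s r : Γ → Γ}

theorem mem_center_of_forall_commute (hg : AffineGenerators g s r) {z : K}
    (hz : ∀ w, Commute z (g w)) : z ∈ center K := by
  rw [← centralizer_univ, ← coe_top, ← hg.closure_range, centralizer_closure,
    mem_centralizer_iff]
  rintro _ ⟨w, rfl⟩
  exact (hz w).symm

theorem commute_inv_mul_mul (hg : AffineGenerators g s r) {u x y : Γ} (hu : s u = s x + s y)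
    (w : Γ) : Commute ((g u)⁻¹ * (g x * g y)) (g w) := by
  -- `g (s u + w)` expanded directly and as `g (s x + (s y + w))`
  have expand : ∀ w, g u * g w * (g (r u))⁻¹ = g x * g y * g w * (g (r x) * g (r y))⁻¹ := by
    intro w
    rw [← hg.map_add, hu, add_assoc, hg.map_add, hg.map_add]
    group
  refine commute_inv_mul_of_mul_mul_inv_eq (expand w) ?_
  simpa [hg.map_zero] using expand 0

theorem commutatorElement_mem_center (hg : AffineGenerators g s r) (x y : Γ) :
    ⁅g x, g y⁆ ∈ center K := by
  obtain ⟨u, hu⟩ := hg.surjective (s x + s y)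
  have hxy := hg.mem_center_of_forall_commute (hg.commute_inv_mul_mul hu)
  have hyx := hg.mem_center_of_forall_commute (hg.commute_inv_mul_mul (hu.trans (add_comm _ _)))
  set z := (g u)⁻¹ * (g x * g y) * ((g u)⁻¹ * (g y * g x))⁻¹
  have hz : z ∈ center K := mul_mem hxy (inv_mem hyx)
  have hconj : ⁅g x, g y⁆ = g u * z * (g u)⁻¹ := by
    simp only [z, commutatorElement_def]; group
  rw [hconj, mem_center_iff.1 hz, mul_inv_cancel_right]
  exact hz

theorem commutatorElement_mem_center_inf (hg : AffineGenerators g s r) (x y : Γ) :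
    ⁅g x, g y⁆ ∈ center K ⊓ commutator K :=
  ⟨hg.commutatorElement_mem_center x y, commutator_eq_closure K ▸ subset_closure ⟨_, _, rfl⟩⟩

theorem exists_mul_eq_mul (hg : AffineGenerators g s r) (a b : Γ) :
    ∃ c ∈ center K ⊓ commutator K, g a * g b = g (a + b) * c := by
  obtain ⟨u, rfl⟩ := hg.surjective a
  have hc := hg.commutatorElement_mem_center_inf b (r u)
  refine ⟨⁅g b, g (r u)⁆, hc, ?_⟩
  have hsu : g (s u) = g u * (g (r u))⁻¹ := by simpa [hg.map_zero] using hg.map_add u 0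
  have hconj : ⁅g b, g (r u)⁆ = ⁅g (r u), (g b)⁻¹⁆ := by
    rw [commutatorElement_inv_right, mul_assoc, ← mem_center_iff.1 hc.1 (g b), inv_mul_cancel_left]
  rw [hconj, hg.map_add, hsu, commutatorElement_def]
  group

theorem exists_eq_mul (hg : AffineGenerators g s r) (k : K) :
    ∃ a, ∃ ξ ∈ center K ⊓ commutator K, k = g a * ξ := by
  have hk : k ∈ closure (Set.range g) := hg.closure_range ▸ mem_top k
  induction hk using closure_induction with
  | mem _ hk =>
    obtain ⟨a, rfl⟩ := hk
    exact ⟨a, 1, one_mem _, (mul_one _).symm⟩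
  | one => exact ⟨0, 1, one_mem _, by rw [hg.map_zero, one_mul]⟩
  | mul _ _ _ _ ihk ihl =>
    obtain ⟨a, ξ, hξ, rfl⟩ := ihk
    obtain ⟨b, η, hη, rfl⟩ := ihl
    obtain ⟨c, hc, hab⟩ := hg.exists_mul_eq_mul a b
    refine ⟨a + b, c * (ξ * η), mul_mem hc (mul_mem hξ hη), ?_⟩
    calc g a * ξ * (g b * η) = g a * (g b * ξ) * η := by
          rw [mem_center_iff.1 hξ.1 (g b)]; group
      _ = g (a + b) * (c * (ξ * η)) := by rw [← mul_assoc, hab]; group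
  | inv _ _ ih =>
    obtain ⟨a, ξ, hξ, rfl⟩ := ih
    obtain ⟨c, hc, hac⟩ := hg.exists_mul_eq_mul a (-a)
    rw [add_neg_cancel, hg.map_zero, one_mul] at hac
    have hinv : (g a)⁻¹ = g (-a) * c⁻¹ := by rw [← hac]; group
    refine ⟨-a, c⁻¹ * ξ⁻¹, mul_mem (inv_mem hc) (inv_mem hξ), ?_⟩
    rw [mul_inv_rev, ← mem_center_iff.1 (inv_mem hξ.1) (g a)⁻¹, hinv, mul_assoc]

theorem commutatorSet_subset (hg : AffineGenerators g s r) :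
    commutatorSet K ⊆ Set.range fun p : Γ × Γ ↦ ⁅g p.1, g p.2⁆ := by
  rintro _ ⟨k, l, rfl⟩
  obtain ⟨a, ξ, hξ, rfl⟩ := hg.exists_eq_mul k
  obtain ⟨b, η, hη, rfl⟩ := hg.exists_eq_mul l
  exact ⟨(a, b), by rw [commutatorElement_mul_left_of_mem_center hξ.1,
    commutatorElement_mul_right_of_mem_center hη.1]⟩

theorem commutator_le_center (hg : AffineGenerators g s r) : commutator K ≤ center K := by
  rw [commutator_eq_closure, closure_le]
  refine hg.commutatorSet_subset.trans ?_
  rintro _ ⟨⟨x, y⟩, rfl⟩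
  exact hg.commutatorElement_mem_center x y

theorem isNilpotent (hg : AffineGenerators g s r) : Group.IsNilpotent K :=
  Group.isNilpotent_of_commutator_le_center hg.commutator_le_center

theorem commutatorElement_map_add (hg : AffineGenerators g s r) (x y w : Γ) :
    ⁅g (x + y), g w⁆ = ⁅g x, g w⁆ * ⁅g y, g w⁆ := by
  obtain ⟨c, hc, hxy⟩ := hg.exists_mul_eq_mul x y
  have hcen := hg.commutatorElement_mem_center y w
  rw [← commutatorElement_mul_left_of_mem_center hc.1, ← hxy,
    commutatorElement_mul_left_eq_conj_mul, mem_center_iff.1 hcen, mul_inv_cancel_right,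
    mem_center_iff.1 hcen]

theorem commutatorElement_pow_card (hg : AffineGenerators g s r) (x w : Γ) :
    ⁅g x, g w⁆ ^ Nat.card Γ = 1 := by
  have hpow : ∀ n : ℕ, ⁅g (n • x), g w⁆ = ⁅g x, g w⁆ ^ n := by
    intro n
    induction n with
    | zero => rw [zero_smul, hg.map_zero, commutatorElement_one_left, pow_zero]
    | succ n ih => rw [succ_nsmul, hg.commutatorElement_map_add, ih, pow_succ]
  rw [← hpow, card_nsmul_eq_zero', hg.map_zero, commutatorElement_one_left]

theorem pow_card_eq_one_of_mem_commutator (hg : AffineGenerators g s r) {ξ : K}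
    (hξ : ξ ∈ commutator K) : ξ ^ Nat.card Γ = 1 := by
  rw [commutator_eq_closure] at hξ
  refine pow_eq_one_of_mem_closure_of_subset_center
    (fun k hk ↦ hg.commutator_le_center (commutator_eq_closure K ▸ subset_closure hk)) ?_ hξ
  intro k hk
  obtain ⟨⟨x, y⟩, rfl⟩ := hg.commutatorSet_subset hk
  exact hg.commutatorElement_pow_card x y

theorem finite [Finite Γ] (hg : AffineGenerators g s r) : Finite K := by
  -- then `commutator K` is finite by Schur's theorem, an instance
  have : Finite (commutatorSet K) :=
    ((Set.finite_range _).subset hg.commutatorSet_subset).to_subtype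
  refine Finite.of_surjective (fun p : Γ × commutator K ↦ g p.1 * p.2) fun k ↦ ?_
  obtain ⟨a, ξ, hξ, rfl⟩ := hg.exists_eq_mul k
  exact ⟨(a, ⟨ξ, hξ.2⟩), rfl⟩

theorem exists_pow_eq_mul (hg : AffineGenerators g s r) (a : Γ) (n : ℕ) :
    ∃ ζ ∈ center K ⊓ commutator K, g a ^ n = g (n • a) * ζ := by
  induction n with
  | zero => exact ⟨1, one_mem _, by rw [pow_zero, zero_smul, hg.map_zero, one_mul]⟩
  | succ n ih =>
    obtain ⟨ζ, hζ, hpow⟩ := ih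
    obtain ⟨c, hc, hmul⟩ := hg.exists_mul_eq_mul (n • a) a
    refine ⟨c * ζ, mul_mem hc hζ, ?_⟩
    rw [pow_succ, hpow, mul_assoc, ← mem_center_iff.1 hζ.1, ← mul_assoc, hmul, succ_nsmul,
      mul_assoc]

theorem pow_card_mul_card_eq_one (hg : AffineGenerators g s r) (k : K) :
    k ^ (Nat.card Γ * Nat.card Γ) = 1 := by
  obtain ⟨a, ξ, hξ, rfl⟩ := hg.exists_eq_mul k
  obtain ⟨ζ, hζ, hpow⟩ := hg.exists_pow_eq_mul a (Nat.card Γ)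
  rw [card_nsmul_eq_zero', hg.map_zero, one_mul] at hpow
  rw [pow_mul, Commute.mul_pow (mem_center_iff.1 hξ.1 (g a)), hpow,
    hg.pow_card_eq_one_of_mem_commutator hξ.2, mul_one, hg.pow_card_eq_one_of_mem_commutator hζ.2]

theorem isPGroup [Finite Γ] (hg : AffineGenerators g s r) {p : ℕ} [Fact p.Prime]
    (hΓ : IsPGroup p (Multiplicative Γ)) : IsPGroup p K := by
  obtain ⟨n, hn⟩ := IsPGroup.iff_card.1 hΓ
  refine fun k ↦ ⟨n + n, ?_⟩
  rw [pow_add, ← hn]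
  exact hg.pow_card_mul_card_eq_one k

end AffineGenerators

section AffineEnvelope

open Subgroup

theorem Rack.closure_range_toEnvelGroup (R : Type*) [Rack R] :
    closure (Set.range (Rack.toEnvelGroup R) : Set (Rack.EnvelGroup R)) = ⊤ := by
  refine (eq_top_iff' _).2 fun x ↦ ?_
  induction x using Quotient.inductionOn with
  | h a =>
    induction a with
    | unit => exact one_mem _
    | incl y => exact subset_closure ⟨y, rfl⟩
    | mul a b iha ihb => exact mul_mem iha ihb
    | inv a iha => exact inv_mem iha

theorem surjective_sub_of_fixedPointFree {Γ F : Type*} [AddCommGroup Γ] [Finite Γ]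
    [FunLike F Γ Γ] [AddMonoidHomClass F Γ Γ] {t : F} (ht : ∀ x, t x = x → x = 0) :
    Function.Surjective fun x ↦ x - t x := by
  refine Finite.injective_iff_surjective.1 fun x y hxy ↦ ?_
  have hxy : x - t x = y - t y := hxy
  have : t (x - y) = x - y := by rw [map_sub, sub_eq_sub_iff_sub_eq_sub.1 hxy]
  exact sub_eq_zero.1 (ht _ this)

variable {Γ : Type*} [AddCommGroup Γ] (t : Γ ≃+ Γ)

def affEnvel (x : Γ) : @Rack.EnvelGroup Γ (affRack t) :=
  @Rack.toEnvelGroup Γ (affRack t) x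

def affEnvelDiv (x : Γ) : @Rack.EnvelGroup Γ (affRack t) :=
  affEnvel t x * (affEnvel t 0)⁻¹

theorem affEnvel_conj (x y : Γ) :
    affEnvel t x * affEnvel t y * (affEnvel t x)⁻¹ = affEnvel t (x - t x + t y) :=
  (@ShelfHom.map_act Γ _ (affRack t).toShelf _ (@Rack.toEnvelGroup Γ (affRack t)) x y).symm

theorem affEnvel_zero_conj (y : Γ) :
    affEnvel t 0 * affEnvel t y * (affEnvel t 0)⁻¹ = affEnvel t (t y) := by
  simpa using affEnvel_conj t 0 y

theorem affEnvelDiv_sub_add (u w : Γ) :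
    affEnvelDiv t (u - t u + w) =
      affEnvelDiv t u * affEnvelDiv t w * (affEnvelDiv t (t u))⁻¹ := by
  have h1 := affEnvel_conj t u (t.symm w)
  have h2 := affEnvel_zero_conj t u
  have h3 := affEnvel_zero_conj t (t.symm w)
  rw [t.apply_symm_apply] at h1 h3
  rw [affEnvelDiv, affEnvelDiv, affEnvelDiv, affEnvelDiv, ← h1, ← h2, ← h3]
  group

theorem affEnvelDiv_sub_self (u : Γ) :
    affEnvelDiv t (u - t u) = ⁅affEnvel t u, affEnvel t 0⁆ := by
  rw [affEnvelDiv, commutatorElement_def, affEnvel_conj t u 0, map_zero, add_zero]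

theorem conj_affEnvelDiv (y : Γ) :
    MulAut.conj (affEnvel t 0) (affEnvelDiv t y) = affEnvelDiv t (t y) := by
  rw [MulAut.conj_apply, affEnvelDiv, affEnvelDiv, ← affEnvel_zero_conj]
  group

theorem closure_range_affEnvel : closure (Set.range (affEnvel t)) = ⊤ :=
  @Rack.closure_range_toEnvelGroup Γ (affRack t)

instance normal_closure_range_affEnvelDiv : (closure (Set.range (affEnvelDiv t))).Normal := by
  have he : affEnvel t 0 ∈ normalizer (closure (Set.range (affEnvelDiv t)) : Set _) := by
    refine normalizer_le_normalizer_closure _ ?_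
    have hconj : MulAut.conj (affEnvel t 0) ∘ affEnvelDiv t = affEnvelDiv t ∘ t :=
      funext (conj_affEnvelDiv t)
    rw [mem_normalizer_iff_conj_image_eq, ← Set.range_comp, hconj, t.surjective.range_comp]
  rw [← normalizer_eq_top_iff, eq_top_iff, ← closure_range_affEnvel, closure_le]
  rintro _ ⟨x, rfl⟩
  rw [← inv_mul_cancel_right (affEnvel t x) (affEnvel t 0)]
  exact mul_mem (le_normalizer (subset_closure ⟨x, rfl⟩)) he

theorem commutator_envelGroup_affRack_eq (hs : Function.Surjective fun x ↦ x - t x) :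
    commutator (@Rack.EnvelGroup Γ (affRack t)) = closure (Set.range (affEnvelDiv t)) := by
  refine le_antisymm
    (commutator_le_of_forall_mk_eq (closure_range_affEnvel t) (affEnvel t 0) ?_) ?_
  · rintro _ ⟨x, rfl⟩
    rw [QuotientGroup.eq_iff_div_mem, div_eq_mul_inv]
    exact subset_closure ⟨x, rfl⟩
  · rw [closure_le]
    rintro _ ⟨x, rfl⟩
    obtain ⟨u, rfl⟩ := hs x
    rw [SetLike.mem_coe, affEnvelDiv_sub_self, commutator_eq_closure]
    exact subset_closure ⟨_, _, rfl⟩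

theorem affineGenerators_affEnvelDiv (hs : Function.Surjective fun x ↦ x - t x) :
    AffineGenerators (fun x ↦ (⟨affEnvelDiv t x, subset_closure ⟨x, rfl⟩⟩ :
      closure (Set.range (affEnvelDiv t)))) (fun x ↦ x - t x) t where
  closure_range := by
    rw [← closure_closure_coe_preimage (k := Set.range (affEnvelDiv t))]
    congr 1
    ext ⟨y, hy⟩
    simp [Subtype.ext_iff]
  surjective := hs
  map_zero := Subtype.ext (mul_inv_cancel _)
  map_add u w := Subtype.ext (affEnvelDiv_sub_add t u w)

end AffineEnvelope

/-- Let `Γ` be a finite abelian group, `t` a fixed-point free automorphism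
of `Γ`, `X = Aff(Γ, t)`, `G_X` the enveloping group of `X` and `D_X = [G_X, G_X]`. Then
`D_X` is finite and nilpotent, and if `Γ` is a `p`-group for a prime `p` then `D_X` is a
`p`-group. -/
theorem commutator_envelGroup_affRack_finite_nilpotent
    {Γ : Type*} [AddCommGroup Γ] [Finite Γ] (t : Γ ≃+ Γ)
    (hfpf : ∀ x : Γ, t x = x → x = 0) :
    Finite (commutator (@Rack.EnvelGroup Γ (affRack t))) ∧
    Group.IsNilpotent (commutator (@Rack.EnvelGroup Γ (affRack t))) ∧
    ∀ p : ℕ, p.Prime → IsPGroup p (Multiplicative Γ) →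
      IsPGroup p (commutator (@Rack.EnvelGroup Γ (affRack t))) := by
  have hs := surjective_sub_of_fixedPointFree hfpf
  have hg := affineGenerators_affEnvelDiv t hs
  rw [commutator_envelGroup_affRack_eq t hs]
  exact ⟨hg.finite, hg.isNilpotent, fun p hp hΓ ↦ haveI := Fact.mk hp; hg.isPGroup hΓ⟩
end

section
/- Let Γ be a finite abelian group, t a fixed-point free automorphism of Γ, X = Aff(Γ, t), G_X the enveloping group of X, and D_X = [G_X, G_X]. Then the abelianization D_X/[D_X, D_X] is isomorphic as a group to Γ, and [D_X, D_X] = D_X ∩ Z(G_X), where Z(G_X) is the center of G_X. -/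
open Quandles

namespace Rack

open Subgroup

variable {R : Type*} [Rack R]

theorem closure_range_toEnvelGroup_s16 :
    closure (Set.range (toEnvelGroup R) : Set (EnvelGroup R)) = ⊤ := by
  set H := closure (Set.range (toEnvelGroup R) : Set (EnvelGroup R))
  let f : R →◃ Quandle.Conj H :=
    { toFun x := ⟨toEnvelGroup R x, subset_closure ⟨x, rfl⟩⟩
      map_act' := Subtype.ext (toEnvelGroup R).map_act }
  have hf : H.subtype.comp (toEnvelGroup.map f) = MonoidHom.id _ :=
    toEnvelGroup.map.symm.injective rfl
  refine eq_top_iff.2 fun g _ => ?_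
  have hg : ((toEnvelGroup.map f g : H) : EnvelGroup R) = g := DFunLike.congr_fun hf g
  exact hg ▸ (toEnvelGroup.map f g).2

theorem conj_toEnvelGroup (g : EnvelGroup R) (y : R) :
    g * toEnvelGroup R y * g⁻¹ = toEnvelGroup R (envelAction g y) := by
  have hg : g ∈ closure (Set.range (toEnvelGroup R) : Set (EnvelGroup R)) := by
    rw [closure_range_toEnvelGroup_s16]; exact mem_top g
  induction hg using closure_induction generalizing y with
  | mem _ hx =>
    obtain ⟨x, rfl⟩ := hx
    exact ((toEnvelGroup R).map_act).symm
  | one => simp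
  | mul g h _ _ ihg ihh =>
    rw [map_mul, Equiv.Perm.mul_apply, ← ihg, ← ihh]
    group
  | inv g _ ih =>
    have := ih ((envelAction g)⁻¹ y)
    rw [← Equiv.Perm.mul_apply, mul_inv_cancel, Equiv.Perm.one_apply] at this
    rw [map_inv, ← this]
    group

theorem ker_envelAction_le_center :
    (envelAction : EnvelGroup R →* R ≃ R).ker ≤ center (EnvelGroup R) := by
  intro g hg
  rw [MonoidHom.mem_ker] at hg
  have hgen : closure (Set.range (toEnvelGroup R) : Set (EnvelGroup R)) ≤ centralizer {g} := by
    rw [closure_le]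
    rintro _ ⟨y, rfl⟩
    rw [SetLike.mem_coe, mem_centralizer_singleton_iff, eq_comm, ← mul_inv_eq_iff_eq_mul,
      conj_toEnvelGroup, hg, Equiv.Perm.one_apply]
  rw [closure_range_toEnvelGroup_s16] at hgen
  exact mem_center_iff.2 fun h => mem_centralizer_singleton_iff.1 (hgen (mem_top h))

def envelDiff (o x : R) : EnvelGroup R := toEnvelGroup R x * (toEnvelGroup R o)⁻¹

def envelDiffSubgroup (o : R) : Subgroup (EnvelGroup R) := closure (Set.range (envelDiff o))

theorem envelDiff_mem_envelDiffSubgroup (o x : R) : envelDiff o x ∈ envelDiffSubgroup o :=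
  subset_closure ⟨x, rfl⟩

theorem conj_envelDiff (g : EnvelGroup R) (o x : R) :
    g * envelDiff o x * g⁻¹ =
      envelDiff o (envelAction g x) * (envelDiff o (envelAction g o))⁻¹ := by
  simp only [envelDiff, ← conj_toEnvelGroup g]
  group

instance envelDiffSubgroup_normal (o : R) : (envelDiffSubgroup o).Normal := by
  refine ⟨fun n hn g => ?_⟩
  have hle : envelDiffSubgroup o ≤ (envelDiffSubgroup o).comap (MulAut.conj g).toMonoidHom := by
    rw [envelDiffSubgroup, closure_le]
    rintro _ ⟨x, rfl⟩
    rw [SetLike.mem_coe, mem_comap, MulEquiv.coe_toMonoidHom, MulAut.conj_apply, conj_envelDiff]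
    exact mul_mem (envelDiff_mem_envelDiffSubgroup o _)
      (inv_mem (envelDiff_mem_envelDiffSubgroup o _))
  exact hle hn

theorem commutator_le_envelDiffSubgroup (o : R) :
    commutator (EnvelGroup R) ≤ envelDiffSubgroup o := by
  refine Normal.commutator_le_of_self_sup_commutative_eq_top (H := zpowers (toEnvelGroup R o))
    ?_ inferInstance
  rw [eq_top_iff, ← closure_range_toEnvelGroup_s16, closure_le]
  rintro _ ⟨x, rfl⟩
  have hx : toEnvelGroup R x = envelDiff o x * toEnvelGroup R o := by simp [envelDiff]
  rw [SetLike.mem_coe, hx]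
  exact mul_mem_sup (envelDiff_mem_envelDiffSubgroup o x) (mem_zpowers _)

theorem envelDiff_act_mem_commutator (x o : R) :
    envelDiff o (x ◃ o) ∈ commutator (EnvelGroup R) := by
  rw [envelDiff, (toEnvelGroup R).map_act, Quandle.conj_act_eq_conj, commutator_def]
  exact commutator_mem_commutator (mem_top (G := EnvelGroup R) _) (mem_top _)

theorem commutator_eq_envelDiffSubgroup {o : R} (ho : Function.Surjective (· ◃ o)) :
    commutator (EnvelGroup R) = envelDiffSubgroup o := by
  refine le_antisymm (commutator_le_envelDiffSubgroup o) ?_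
  rw [envelDiffSubgroup, closure_le]
  rintro _ ⟨y, rfl⟩
  obtain ⟨x, rfl⟩ := ho y
  exact envelDiff_act_mem_commutator x o

end Rack

namespace AffRack

open Rack Subgroup

variable {Γ : Type*} [AddCommGroup Γ]

def translation : Multiplicative Γ →* Equiv.Perm Γ := MulAction.toPermHom _ _

@[simp]
theorem translation_apply (a : Multiplicative Γ) (v : Γ) : translation a v = a.toAdd + v := rfl

theorem translation_injective : Function.Injective (translation (Γ := Γ)) :=
  fun a b h => by simpa using DFunLike.congr_fun h 0

variable {t : Γ ≃+ Γ}

theorem injective_self_sub_apply (hfpf : ∀ x, t x = x → x = 0) :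
    Function.Injective fun x => x - t x := by
  intro x y hxy
  rw [← sub_eq_zero]
  refine hfpf _ ?_
  rw [map_sub]
  exact (sub_eq_sub_iff_sub_eq_sub.1 hxy).symm

variable [Rack Γ]

theorem envelAction_toEnvelGroup_zero (hact : ∀ x y : Γ, x ◃ y = x - t x + t y) :
    envelAction (toEnvelGroup Γ 0) = t.toEquiv := by
  ext v
  simp [hact]

theorem envelAction_envelDiff_zero (hact : ∀ x y : Γ, x ◃ y = x - t x + t y) (x : Γ) :
    envelAction (envelDiff 0 x) = translation (.ofAdd (x - t x)) := by
  ext v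
  rw [envelDiff, map_mul, map_inv, envelAction_toEnvelGroup_zero hact, Equiv.Perm.mul_apply,
    envelAction_prop, hact, translation_apply, toAdd_ofAdd, Equiv.Perm.inv_def,
    AddEquiv.toEquiv_eq_coe, AddEquiv.coe_toEquiv_symm, AddEquiv.apply_symm_apply]

theorem envelDiff_mul_envelDiff (hact : ∀ x y : Γ, x ◃ y = x - t x + t y) (x y : Γ) :
    envelDiff 0 x * envelDiff 0 y = envelDiff 0 (x - t x + y) * envelDiff 0 (t x) := by
  have hy := conj_toEnvelGroup (envelDiff 0 x) y
  have hx := conj_toEnvelGroup (toEnvelGroup Γ 0) x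
  rw [envelAction_envelDiff_zero hact, translation_apply, toAdd_ofAdd] at hy
  rw [envelAction_toEnvelGroup_zero hact, AddEquiv.toEquiv_eq_coe, AddEquiv.coe_toEquiv] at hx
  simp only [envelDiff] at hy ⊢
  rw [← hy, ← hx]
  group

theorem envelAction_mem_range_translation (hact : ∀ x y : Γ, x ◃ y = x - t x + t y)
    {g : EnvelGroup Γ} (hg : g ∈ envelDiffSubgroup 0) : envelAction g ∈ translation.range := by
  have hle : (envelDiffSubgroup (0 : Γ)).map envelAction ≤ translation.range := by
    rw [envelDiffSubgroup, MonoidHom.map_closure, closure_le]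
    rintro _ ⟨_, ⟨x, rfl⟩, rfl⟩
    exact ⟨.ofAdd (x - t x), (envelAction_envelDiff_zero hact x).symm⟩
  exact hle ⟨g, hg, rfl⟩

noncomputable def translationHom (hact : ∀ x y : Γ, x ◃ y = x - t x + t y) :
    envelDiffSubgroup (0 : Γ) →* Multiplicative Γ :=
  (MonoidHom.ofInjective translation_injective).symm.toMonoidHom.comp
    ((envelAction.comp (envelDiffSubgroup 0).subtype).codRestrict _ fun g =>
      envelAction_mem_range_translation hact g.2)

theorem translation_translationHom (hact : ∀ x y : Γ, x ◃ y = x - t x + t y)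
    (g : envelDiffSubgroup (0 : Γ)) : translation (translationHom hact g) = envelAction g :=
  MonoidHom.apply_ofInjective_symm translation_injective
    ⟨envelAction (g : EnvelGroup Γ), envelAction_mem_range_translation hact g.2⟩

theorem translationHom_envelDiff (hact : ∀ x y : Γ, x ◃ y = x - t x + t y) (x : Γ) :
    translationHom hact ⟨envelDiff 0 x, envelDiff_mem_envelDiffSubgroup 0 x⟩ = .ofAdd (x - t x) :=
  translation_injective <| by rw [translation_translationHom, envelAction_envelDiff_zero hact]

theorem translationHom_eq_one_of_mem_center (hact : ∀ x y : Γ, x ◃ y = x - t x + t y)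
    (hfpf : ∀ x, t x = x → x = 0) (g : envelDiffSubgroup (0 : Γ))
    (hg : (g : EnvelGroup Γ) ∈ center (EnvelGroup Γ)) : translationHom hact g = 1 := by
  have hcomm := congrArg envelAction (mem_center_iff.1 hg (toEnvelGroup Γ 0))
  rw [map_mul, map_mul, ← translation_translationHom hact, envelAction_toEnvelGroup_zero hact]
    at hcomm
  have hfix := DFunLike.congr_fun hcomm 0
  simp only [Equiv.Perm.mul_apply, translation_apply, AddEquiv.toEquiv_eq_coe,
    AddEquiv.coe_toEquiv, map_zero, add_zero] at hfix
  exact toAdd_eq_zero.1 (hfpf _ hfix)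

def abEnvelDiff (x : Γ) : Abelianization (envelDiffSubgroup (0 : Γ)) :=
  Abelianization.of ⟨envelDiff 0 x, envelDiff_mem_envelDiffSubgroup 0 x⟩

theorem abEnvelDiff_zero : abEnvelDiff (0 : Γ) = 1 := by
  rw [abEnvelDiff, ← map_one Abelianization.of]
  congr 1
  exact Subtype.ext (mul_inv_cancel _)

theorem abEnvelDiff_mul (hact : ∀ x y : Γ, x ◃ y = x - t x + t y) (x y : Γ) :
    abEnvelDiff x * abEnvelDiff y = abEnvelDiff (x - t x + y) * abEnvelDiff (t x) := by
  simp only [abEnvelDiff, ← map_mul]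
  congr 1
  exact Subtype.ext (envelDiff_mul_envelDiff hact x y)

theorem abEnvelDiff_add (hact : ∀ x y : Γ, x ◃ y = x - t x + t y)
    (hs : Function.Surjective fun x => x - t x) (a b : Γ) :
    abEnvelDiff (a + b) = abEnvelDiff a * abEnvelDiff b := by
  obtain ⟨x, rfl⟩ := hs a
  -- the case `b = 0` reads `[g_x] = [g_{x - t x}] [g_{t x}]`; cancel `[g_{t x}]`
  have hxb := abEnvelDiff_mul hact x b
  have hx0 := abEnvelDiff_mul hact x 0
  rw [abEnvelDiff_zero, mul_one, add_zero] at hx0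
  rw [hx0, mul_right_comm] at hxb
  exact (mul_right_cancel hxb).symm

noncomputable def abEnvelDiffHom (hact : ∀ x y : Γ, x ◃ y = x - t x + t y)
    (hs : Function.Surjective fun x => x - t x) :
    Multiplicative Γ →* Abelianization (envelDiffSubgroup (0 : Γ)) :=
  MonoidHom.mk' (fun a => abEnvelDiff a.toAdd) fun a b => abEnvelDiff_add hact hs a.toAdd b.toAdd

theorem abEnvelDiffHom_surjective (hact : ∀ x y : Γ, x ◃ y = x - t x + t y)
    (hs : Function.Surjective fun x => x - t x) : Function.Surjective (abEnvelDiffHom hact hs) := by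
  have hle : closure (((↑) : envelDiffSubgroup (0 : Γ) → EnvelGroup Γ) ⁻¹' Set.range (envelDiff 0))
      ≤ (abEnvelDiffHom hact hs).range.comap Abelianization.of := by
    rw [closure_le]
    rintro g ⟨x, hx⟩
    exact ⟨.ofAdd x, congrArg Abelianization.of (Subtype.ext hx)⟩
  intro α
  induction α using QuotientGroup.induction_on with
  | H g => exact (eq_top_iff.1 closure_closure_coe_preimage).trans hle (mem_top g)

theorem bijective_lift_translationHom (hact : ∀ x y : Γ, x ◃ y = x - t x + t y)
    (hs : Function.Bijective fun x => x - t x) :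
    Function.Bijective (Abelianization.lift (translationHom hact)) := by
  have hcomp : Abelianization.lift (translationHom hact) ∘ abEnvelDiffHom hact hs.2 =
      Multiplicative.ofAdd ∘ (fun x => x - t x) ∘ Multiplicative.toAdd := by
    ext a
    exact (Abelianization.lift_apply_of _ _).trans (translationHom_envelDiff hact a.toAdd)
  have hbij : Function.Bijective
      (Abelianization.lift (translationHom hact) ∘ abEnvelDiffHom hact hs.2) := by
    rw [hcomp]
    exact Multiplicative.ofAdd.bijective.comp (hs.comp Multiplicative.toAdd.bijective)
  exact ⟨hbij.1.of_comp_right (abEnvelDiffHom_surjective hact hs.2), hbij.2.of_comp⟩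

theorem ker_translationHom (hact : ∀ x y : Γ, x ◃ y = x - t x + t y)
    (hs : Function.Bijective fun x => x - t x) :
    (translationHom hact).ker = commutator (envelDiffSubgroup (0 : Γ)) := by
  rw [← Abelianization.ker_of, ← MonoidHom.ker_comp_of_injective _ _
    (bijective_lift_translationHom hact hs).1, ← Abelianization.lift_symm_apply,
    Equiv.symm_apply_apply]

theorem commutator_envelDiffSubgroup_eq_inf_center (hact : ∀ x y : Γ, x ◃ y = x - t x + t y)
    (hfpf : ∀ x, t x = x → x = 0) (hs : Function.Surjective fun x => x - t x) :
    ⁅envelDiffSubgroup (0 : Γ), envelDiffSubgroup 0⁆ =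
      envelDiffSubgroup 0 ⊓ center (EnvelGroup Γ) := by
  rw [← map_subtype_commutator, ← ker_translationHom hact ⟨injective_self_sub_apply hfpf, hs⟩]
  ext g
  constructor
  · rintro ⟨m, hm, rfl⟩
    refine ⟨m.2, ker_envelAction_le_center ?_⟩
    rw [MonoidHom.mem_ker, coe_subtype, ← translation_translationHom hact, MonoidHom.mem_ker.1 hm,
      map_one]
  · rintro ⟨hg, hgZ⟩
    exact ⟨⟨g, hg⟩, translationHom_eq_one_of_mem_center hact hfpf _ hgZ, rfl⟩

end AffRack

/-- Let `Γ` be a finite abelian group, `t` a fixed-point free automorphism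
of `Γ`, `X = Aff(Γ, t)`, `G_X` the enveloping group of `X` and `D_X = [G_X, G_X]`. Then the
abelianization `D_X/[D_X, D_X]` is isomorphic to `Γ`, and `[D_X, D_X] = D_X ∩ Z(G_X)`. -/
theorem commutator_envelGroup_affRack_abelianization
    {Γ : Type*} [AddCommGroup Γ] [Finite Γ] (t : Γ ≃+ Γ)
    (hfpf : ∀ x : Γ, t x = x → x = 0) :
    Nonempty (Abelianization (commutator (@Rack.EnvelGroup Γ (affRack t)))
        ≃* Multiplicative Γ) ∧
    ⁅commutator (@Rack.EnvelGroup Γ (affRack t)),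
        commutator (@Rack.EnvelGroup Γ (affRack t))⁆ =
      commutator (@Rack.EnvelGroup Γ (affRack t)) ⊓
        Subgroup.center (@Rack.EnvelGroup Γ (affRack t)) := by
  let := affRack t
  have hact : ∀ x y : Γ, x ◃ y = x - t x + t y := fun _ _ => rfl
  have hs : Function.Bijective fun x => x - t x :=
    Finite.injective_iff_bijective.1 (AffRack.injective_self_sub_apply hfpf)
  have hact0 : Function.Surjective (· ◃ (0 : Γ)) := by simpa [hact] using hs.2
  rw [Rack.commutator_eq_envelDiffSubgroup hact0]
  exact ⟨⟨MulEquiv.ofBijective _ (AffRack.bijective_lift_translationHom hact hs)⟩,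
    AffRack.commutator_envelDiffSubgroup_eq_inf_center hact hfpf hs.2⟩
end

section
/- Let G be a finite group, Γ a normal subgroup of G, and g ∈ G. Then the set X = {γ g γ⁻¹ : γ ∈ Γ} is closed under the conjugation operation x ▷ y = x y x⁻¹, i.e. X is a subrack of the conjugation rack of G. Let t be the automorphism of Γ given by t(γ) = g γ g⁻¹. If t is fixed-point free, then |X| = |Γ|. If furthermore Γ is abelian, then the map Aff(Γ, t) → X sending γ to γ g γ⁻¹ is a rack isomorphism. -/
/-- Let `G` be a finite group, `Γ` a normal subgroup and `g ∈ G`. Then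
`X = {γ g γ⁻¹ : γ ∈ Γ}` is a subrack of the conjugation rack of `G`. If the automorphism
`t : γ ↦ g γ g⁻¹` of `Γ` is fixed-point free, then `|X| = |Γ|`; if moreover `Γ` is abelian,
then `γ ↦ γ g γ⁻¹` is a rack isomorphism `Aff(Γ, t) → X` (where, multiplicatively,
`a ▷ b = a (t a)⁻¹ t b` in `Aff(Γ, t)`). -/
theorem conjOrbit_subrack_and_affine
    {G : Type*} [Group G] [Finite G] (Γ : Subgroup G) [Γ.Normal] (g : G)
    (t : Γ ≃* Γ) (ht : ∀ γ : Γ, (t γ : G) = g * γ * g⁻¹) :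
    (∀ x ∈ {x : G | ∃ γ ∈ Γ, γ * g * γ⁻¹ = x}, ∀ y ∈ {x : G | ∃ γ ∈ Γ, γ * g * γ⁻¹ = x},
      x * y * x⁻¹ ∈ {x : G | ∃ γ ∈ Γ, γ * g * γ⁻¹ = x}) ∧
    ((∀ γ : Γ, t γ = γ → γ = 1) →
      Nat.card {x : G | ∃ γ ∈ Γ, γ * g * γ⁻¹ = x} = Nat.card Γ) ∧
    ((∀ γ : Γ, t γ = γ → γ = 1) → (∀ a b : Γ, a * b = b * a) →
      (Function.Injective (fun γ : Γ => (γ : G) * g * (γ : G)⁻¹) ∧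
       Set.range (fun γ : Γ => (γ : G) * g * (γ : G)⁻¹) =
         {x : G | ∃ γ ∈ Γ, γ * g * γ⁻¹ = x} ∧
       ∀ a b : Γ,
         ((((a * (t a)⁻¹ * t b : Γ) : G)) * g * (((a * (t a)⁻¹ * t b : Γ) : G))⁻¹) =
           ((a : G) * g * (a : G)⁻¹) * ((b : G) * g * (b : G)⁻¹) *
             ((a : G) * g * (a : G)⁻¹)⁻¹)) := by
  have hrange : Set.range (fun γ : Γ => (γ : G) * g * (γ : G)⁻¹) =
      {x : G | ∃ γ ∈ Γ, γ * g * γ⁻¹ = x} := by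
    ext x
    constructor
    · rintro ⟨γ, rfl⟩
      exact ⟨γ, γ.2, rfl⟩
    · rintro ⟨γ, hγ, rfl⟩
      exact ⟨⟨γ, hγ⟩, rfl⟩
  have hinj : (∀ γ : Γ, t γ = γ → γ = 1) →
      Function.Injective (fun γ : Γ => (γ : G) * g * (γ : G)⁻¹) := by
    intro hfp a b hab
    simp only at hab
    have hcomm : g * ((b : G)⁻¹ * a) * g⁻¹ = (b : G)⁻¹ * a :=
      calc g * ((b : G)⁻¹ * a) * g⁻¹
          = (b : G)⁻¹ * ((b : G) * g * (b : G)⁻¹) * a * g⁻¹ := by group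
        _ = (b : G)⁻¹ * ((a : G) * g * (a : G)⁻¹) * a * g⁻¹ := by rw [← hab]
        _ = (b : G)⁻¹ * a := by group
    have h1 : t (b⁻¹ * a) = b⁻¹ * a := by
      apply Subtype.ext
      rw [ht]
      push_cast
      exact hcomm
    have := hfp _ h1
    have : (b : G)⁻¹ * a = 1 := by
      have := congrArg (Subtype.val) this
      simpa using this
    have : (a : G) = b := by
      rw [← mul_one (b : G), ← this]; group
    exact Subtype.ext this
  refine ⟨?_, ?_, ?_⟩
  · rintro x ⟨γ, hγ, rfl⟩ y ⟨δ, hδ, rfl⟩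
    refine ⟨γ * (g * γ⁻¹ * g⁻¹) * (g * δ * g⁻¹), ?_, by group⟩
    exact mul_mem (mul_mem hγ (by simpa using Subgroup.Normal.conj_mem ‹Γ.Normal› γ⁻¹ (inv_mem hγ) g))
      (Subgroup.Normal.conj_mem ‹Γ.Normal› δ hδ g)
  · intro hfp
    rw [← hrange, Nat.card_range_of_injective (hinj hfp)]
  · intro hfp _
    refine ⟨hinj hfp, hrange, fun a b => ?_⟩
    have h1 : ((a * (t a)⁻¹ * t b : Γ) : G) = (a : G) * (g * a * g⁻¹)⁻¹ * (g * b * g⁻¹) := by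
      push_cast
      rw [ht, ht]
    rw [h1]; group
end
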